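/- arXiv:2404.15205 — 5 statements merged into one kernel-verified Lean document; each statement's English description precedes it below -/
import Mathlib

section
/- For every dimension d ≥ 1 and every non-decreasing function Ψ : ℝ_{≥0} → ℝ_{≥0}, there exists a probability measure μ on ℝ^d such that ∫_{ℝ^d} e^{Ψ(‖x‖)} μ(dx) < ∞, and yet for every t > 0, inf_{z ∈ ℝ^d, w ∈ S^{d−1}} ⟨w, −∇² log(μ*γ_t)(z) w⟩ = −∞. (One may take μ = ν × δ_0 × ⋯ × δ_0 where ν is the one-dimensional measure from the one-dimensional negative result.) -/
noncomputable section
open Real MeasureTheory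

/-- Centered Gaussian density on `ℝ^d` with covariance `t • I_d`. -/
def gaussDensity {d : ℕ} (t : ℝ) (x : EuclideanSpace ℝ (Fin d)) : ℝ :=
  (2 * π * t) ^ (-(d : ℝ) / 2) * Real.exp (-‖x‖ ^ 2 / (2 * t))

/-- The heat flow `μ * γ_t` started from a measure `μ` on `ℝ^d`. -/
def heatConvMeas {d : ℕ} (μ : Measure (EuclideanSpace ℝ (Fin d))) (t : ℝ)
    (z : EuclideanSpace ℝ (Fin d)) : ℝ :=
  ∫ x, gaussDensity t (z - x) ∂μ

/-!
Take `μ = ∑ₖ wₖ δ_{k² e}` for a unit vector `e`, with weights `wₖ > 0` decaying so fast that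
`∑ₖ wₖ e^{Ψ(k²)} < ∞`. Writing `z = s e + z⊥`, the heat flow factorises as
`μ * γ_t (z) = c · e^{-‖z⊥‖²/2t} · F(s)` with `F(s) = ∑ₖ wₖ e^{-(s - k²)²/2t}`, so along `e`
the Hessian of `log (μ * γ_t)` is `(log F)''(s) = Var_s / t² - 1/t`, where `Var_s` is the variance
of the posterior law `∝ wₖ e^{-(s - k²)²/2t}` of the atoms. By the intermediate value theorem some
`s` gives posterior mass exactly `1/2` to the atoms `0², …, k²`; since the gap to `(k + 1)²` is
`2k + 1`, this forces `Var_s ≥ (2k + 1)² / 8`, which is unbounded in `k`.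
-/

open scoped RealInnerProductSpace
open Finset

section Variance

variable {ι : Type*} {p y : ι → ℝ}

lemma tsum_mul_sub_sq (h0 : Summable p) (h1 : Summable fun i => p i * y i)
    (h2 : Summable fun i => p i * y i ^ 2) (b : ℝ) :
    ∑' i, p i * (y i - b) ^ 2 =
      ∑' i, p i * y i ^ 2 - 2 * b * ∑' i, p i * y i + b ^ 2 * ∑' i, p i := by
  rw [← tsum_mul_left, ← tsum_mul_left, ← h2.tsum_sub (h1.mul_left _),
    ← (h2.sub (h1.mul_left _)).tsum_add (h0.mul_left _)]
  congr 1 with i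
  ring

lemma mul_le_tsum_mul_sub_sq (hp : ∀ i, 0 ≤ p i) (h0 : Summable p)
    {b : ℝ} (h2 : Summable fun i => p i * (y i - b) ^ 2) {S : Finset ι} {m δ a : ℝ} (hδ : 0 ≤ δ)
    (hS : ∀ i ∈ S, y i ≤ m - δ) (hSc : ∀ i ∉ S, m + δ ≤ y i)
    (hhead : a ≤ ∑ i ∈ S, p i) (htail : a ≤ ∑' i : ↑(S : Set ι)ᶜ, p i) :
    δ ^ 2 * a ≤ ∑' i, p i * (y i - b) ^ 2 := by
  rcases le_total b m with hb | hb
  · calc δ ^ 2 * a ≤ δ ^ 2 * ∑' i : ↑(S : Set ι)ᶜ, p i := by gcongr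
      _ = ∑' i : ↑(S : Set ι)ᶜ, δ ^ 2 * p i := tsum_mul_left.symm
      _ ≤ ∑' i : ↑(S : Set ι)ᶜ, p i * (y i - b) ^ 2 := by
        refine ((h0.subtype _).mul_left _).tsum_le_tsum (fun i => ?_) (h2.subtype _)
        have := hSc i i.2
        rw [mul_comm (δ ^ 2)]
        exact mul_le_mul_of_nonneg_left (by nlinarith) (hp _)
      _ ≤ ∑' i, p i * (y i - b) ^ 2 :=
        h2.tsum_subtype_le _ _ (fun i => mul_nonneg (hp i) (sq_nonneg _))
  · calc δ ^ 2 * a ≤ δ ^ 2 * ∑ i ∈ S, p i := by gcongr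
      _ = ∑ i ∈ S, δ ^ 2 * p i := mul_sum _ _ _
      _ ≤ ∑ i ∈ S, p i * (y i - b) ^ 2 := by
        refine sum_le_sum fun i hi => ?_
        have := hS i hi
        rw [mul_comm (δ ^ 2)]
        exact mul_le_mul_of_nonneg_left (by nlinarith) (hp _)
      _ ≤ ∑' i, p i * (y i - b) ^ 2 :=
        h2.sum_le_tsum _ (fun i _ => mul_nonneg (hp i) (sq_nonneg _))

lemma half_sq_le_variance (hp : ∀ i, 0 ≤ p i) (h0 : Summable p)
    (h1 : Summable fun i => p i * y i) (h2 : Summable fun i => p i * y i ^ 2)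
    (hpos : 0 < ∑' i, p i) {S : Finset ι} {m δ : ℝ} (hδ : 0 ≤ δ)
    (hS : ∀ i ∈ S, y i ≤ m - δ) (hSc : ∀ i ∉ S, m + δ ≤ y i)
    (hhalf : 2 * ∑ i ∈ S, p i = ∑' i, p i) :
    δ ^ 2 / 2 ≤ (∑' i, p i * y i ^ 2) / ∑' i, p i - ((∑' i, p i * y i) / ∑' i, p i) ^ 2 := by
  set b := (∑' i, p i * y i) / ∑' i, p i
  have hb2 : Summable fun i => p i * (y i - b) ^ 2 :=
    ((h2.sub (h1.mul_left (2 * b))).add (h0.mul_left (b ^ 2))).congr fun i => by ring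
  have hsplit := h0.sum_add_tsum_compl (s := S)
  have hvar := mul_le_tsum_mul_sub_sq hp h0 hb2 hδ hS hSc (a := (∑' i, p i) / 2)
    (by linarith) (by linarith)
  rw [tsum_mul_sub_sq h0 h1 h2] at hvar
  have hb : b * ∑' i, p i = ∑' i, p i * y i := div_mul_cancel₀ _ hpos.ne'
  have hexp : ∑' i, p i * y i ^ 2 - 2 * b * ∑' i, p i * y i + b ^ 2 * ∑' i, p i =
      ∑' i, p i * y i ^ 2 - (∑' i, p i) * b ^ 2 := by
    rw [← hb]; ring
  rw [div_sub' hpos.ne', le_div_iff₀ hpos]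
  linarith

end Variance

def gaussBump (t c s : ℝ) : ℝ := exp (-(s - c) ^ 2 / (2 * t))

section GaussBump

variable {t : ℝ}

lemma gaussBump_pos (t c s : ℝ) : 0 < gaussBump t c s := exp_pos _

lemma gaussBump_neg (t c s : ℝ) : gaussBump t (-c) (-s) = gaussBump t c s := by
  simp only [gaussBump]; ring_nf

lemma gaussBump_le_gaussBump (ht : 0 < t) {c c' s : ℝ} (h : |s - c'| ≤ |s - c|) :
    gaussBump t c s ≤ gaussBump t c' s := by
  unfold gaussBump
  rw [exp_le_exp]
  exact div_le_div_of_nonneg_right (neg_le_neg (sq_le_sq.2 h)) (by positivity)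

lemma gaussBump_le_one (ht : 0 < t) (c s : ℝ) : gaussBump t c s ≤ 1 :=
  exp_le_one_iff.2 (div_nonpos_of_nonpos_of_nonneg (neg_nonpos.2 (sq_nonneg _)) (by positivity))

lemma sq_mul_gaussBump_le (ht : 0 < t) (c s : ℝ) : (c - s) ^ 2 * gaussBump t c s ≤ 2 * t := by
  set u := (s - c) ^ 2 / (2 * t)
  have hg : gaussBump t c s = exp (-u) := by rw [gaussBump, neg_div]
  calc (c - s) ^ 2 * gaussBump t c s = 2 * t * (u * exp (-u)) := by
        rw [hg, ← mul_assoc, mul_div_cancel₀ _ (by positivity : (2 * t) ≠ 0), sub_sq_comm]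
    _ ≤ 2 * t * 1 := by
        gcongr
        exact (mul_exp_neg_le_exp_neg_one u).trans (exp_le_one_iff.2 (by norm_num))
    _ = 2 * t := mul_one _

lemma gaussBump_mul_abs_pow_le (ht : 0 < t) {n : ℕ} (hn : n ≤ 2) (c s : ℝ) :
    gaussBump t c s * |c - s| ^ n ≤ 1 + 2 * t := by
  have hpow : |c - s| ^ n ≤ 1 + (c - s) ^ 2 := by
    interval_cases n <;> nlinarith [abs_nonneg (c - s), sq_abs (c - s)]
  calc gaussBump t c s * |c - s| ^ n ≤ gaussBump t c s * (1 + (c - s) ^ 2) :=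
        mul_le_mul_of_nonneg_left hpow (gaussBump_pos t c s).le
    _ = gaussBump t c s + (c - s) ^ 2 * gaussBump t c s := by ring
    _ ≤ 1 + 2 * t := add_le_add (gaussBump_le_one ht c s) (sq_mul_gaussBump_le ht c s)

lemma hasDerivAt_mul_gaussBump_mul_pow (ht : t ≠ 0) (a c : ℝ) (n : ℕ) (s : ℝ) :
    HasDerivAt (fun s => a * gaussBump t c s * (c - s) ^ n)
      (a * gaussBump t c s * (c - s) ^ (n + 1) / t - n * (a * gaussBump t c s * (c - s) ^ (n - 1)))
      s := by
  have hsq : HasDerivAt (fun s => (s - c) ^ 2) (2 * (s - c)) s := by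
    simpa using ((hasDerivAt_id s).sub_const c).fun_pow 2
  have hexp : HasDerivAt (gaussBump t c) (gaussBump t c s * ((c - s) / t)) s :=
    (hsq.fun_neg.div_const (2 * t)).exp.congr_deriv (by rw [gaussBump]; field_simp; ring)
  have hpow : HasDerivAt (fun s => (c - s) ^ n) (n * (c - s) ^ (n - 1) * -1) s := by
    simpa using ((hasDerivAt_id s).const_sub c).fun_pow n
  exact ((hexp.const_mul a).mul hpow).congr_deriv (by ring)

end GaussBump

def mixtureMoment (w x : ℕ → ℝ) (t : ℝ) (n : ℕ) (s : ℝ) : ℝ :=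
  ∑' k, w k * gaussBump t (x k) s * (x k - s) ^ n

def mixtureVariance (w x : ℕ → ℝ) (t s : ℝ) : ℝ :=
  mixtureMoment w x t 2 s / mixtureMoment w x t 0 s -
    (mixtureMoment w x t 1 s / mixtureMoment w x t 0 s) ^ 2

section MixtureMoment

variable {w x : ℕ → ℝ} {t : ℝ}

lemma norm_mixtureMoment_term_le (ht : 0 < t) (hw : ∀ k, 0 ≤ w k) {n : ℕ} (hn : n ≤ 2)
    (k : ℕ) (s : ℝ) :
    ‖w k * gaussBump t (x k) s * (x k - s) ^ n‖ ≤ w k * (1 + 2 * t) := by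
  rw [mul_assoc, norm_mul, norm_mul, Real.norm_of_nonneg (hw k), norm_pow, Real.norm_eq_abs,
    Real.norm_eq_abs, abs_of_pos (gaussBump_pos _ _ _)]
  exact mul_le_mul_of_nonneg_left (gaussBump_mul_abs_pow_le ht hn _ _) (hw k)

lemma summable_mixtureMoment_term (ht : 0 < t) (hw : ∀ k, 0 ≤ w k) (hws : Summable w)
    {n : ℕ} (hn : n ≤ 2) (s : ℝ) :
    Summable fun k => w k * gaussBump t (x k) s * (x k - s) ^ n :=
  (hws.mul_right _).of_norm_bounded (norm_mixtureMoment_term_le ht hw hn · s)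

lemma continuous_mixtureMoment (ht : 0 < t) (hw : ∀ k, 0 ≤ w k) (hws : Summable w)
    {n : ℕ} (hn : n ≤ 2) : Continuous (mixtureMoment w x t n) :=
  continuous_tsum (fun k => by unfold gaussBump; fun_prop) (hws.mul_right _)
    (norm_mixtureMoment_term_le ht hw hn)

lemma hasDerivAt_mixtureMoment (ht : 0 < t) (hw : ∀ k, 0 ≤ w k) (hws : Summable w)
    {n : ℕ} (hn : n ≤ 1) (s : ℝ) :
    HasDerivAt (mixtureMoment w x t n)
      (mixtureMoment w x t (n + 1) s / t - n * mixtureMoment w x t (n - 1) s) s := by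
  have hbound : ∀ k y, ‖w k * gaussBump t (x k) y * (x k - y) ^ (n + 1) / t
      - n * (w k * gaussBump t (x k) y * (x k - y) ^ (n - 1))‖
      ≤ w k * (1 + 2 * t) / t + n * (w k * (1 + 2 * t)) := by
    intro k y
    refine (norm_sub_le _ _).trans (add_le_add ?_ ?_)
    · rw [norm_div, Real.norm_of_nonneg ht.le]
      gcongr
      exact norm_mixtureMoment_term_le ht hw (n := n + 1) (by omega) k y
    · rw [norm_mul, Real.norm_natCast]
      gcongr
      exact norm_mixtureMoment_term_le ht hw (n := n - 1) (by omega) k y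
  have hsum := hasDerivAt_tsum (((hws.mul_right _).div_const t).add
      ((hws.mul_right _).mul_left (n : ℝ)))
    (fun k y => hasDerivAt_mul_gaussBump_mul_pow ht.ne' (w k) (x k) n y)
    hbound (summable_mixtureMoment_term ht hw hws (by omega) 0) s
  refine hsum.congr_deriv ?_
  unfold mixtureMoment
  rw [← tsum_div_const, ← tsum_mul_left, ← Summable.tsum_sub]
  · exact (summable_mixtureMoment_term ht hw hws (by omega) s).div_const t
  · exact (summable_mixtureMoment_term ht hw hws (by omega) s).mul_left _

lemma hasDerivAt_mixtureMoment_zero (ht : 0 < t) (hw : ∀ k, 0 ≤ w k) (hws : Summable w)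
    (s : ℝ) : HasDerivAt (mixtureMoment w x t 0) (mixtureMoment w x t 1 s / t) s := by
  simpa using hasDerivAt_mixtureMoment ht hw hws zero_le_one s

lemma hasDerivAt_mixtureMoment_one (ht : 0 < t) (hw : ∀ k, 0 ≤ w k) (hws : Summable w)
    (s : ℝ) :
    HasDerivAt (mixtureMoment w x t 1)
      (mixtureMoment w x t 2 s / t - mixtureMoment w x t 0 s) s := by
  simpa using hasDerivAt_mixtureMoment ht hw hws le_rfl s

lemma mixtureMoment_zero (w x : ℕ → ℝ) (t s : ℝ) :
    mixtureMoment w x t 0 s = ∑' k, w k * gaussBump t (x k) s := by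
  simp only [mixtureMoment, pow_zero, mul_one]

lemma mixtureMoment_zero_pos (ht : 0 < t) (hw : ∀ k, 0 < w k) (hws : Summable w) (s : ℝ) :
    0 < mixtureMoment w x t 0 s := by
  have hpos : ∀ k, 0 < w k * gaussBump t (x k) s := fun k => mul_pos (hw k) (gaussBump_pos _ _ _)
  rw [mixtureMoment_zero]
  refine Summable.tsum_pos ?_ (fun k => (hpos k).le) 0 (hpos 0)
  simpa using summable_mixtureMoment_term (x := x) ht (fun k => (hw k).le) hws (n := 0) (by omega) s

lemma contDiff_mixtureMoment_zero (ht : 0 < t) (hw : ∀ k, 0 ≤ w k) (hws : Summable w) :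
    ContDiff ℝ 2 (mixtureMoment w x t 0) := by
  have h0 := hasDerivAt_mixtureMoment_zero (x := x) ht hw hws
  have h1 := hasDerivAt_mixtureMoment_one (x := x) ht hw hws
  rw [show (2 : WithTop ℕ∞) = 1 + 1 from rfl, contDiff_succ_iff_deriv]
  refine ⟨fun s => (h0 s).differentiableAt, by simp, ?_⟩
  rw [funext fun s => (h0 s).deriv, contDiff_one_iff_deriv]
  refine ⟨fun s => ((h1 s).div_const t).differentiableAt, ?_⟩
  rw [funext fun s => ((h1 s).div_const t).deriv]
  exact (((continuous_mixtureMoment ht hw hws le_rfl).div_const t).sub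
    (continuous_mixtureMoment ht hw hws (by omega))).div_const t

lemma iteratedDeriv_two_log_mixtureMoment_zero (ht : 0 < t) (hw : ∀ k, 0 < w k)
    (hws : Summable w) (s : ℝ) :
    iteratedDeriv 2 (fun r => log (mixtureMoment w x t 0 r)) s =
      mixtureVariance w x t s / t ^ 2 - 1 / t := by
  have hpos := mixtureMoment_zero_pos (x := x) ht hw hws
  have h0 := hasDerivAt_mixtureMoment_zero (x := x) ht (fun k => (hw k).le) hws
  have h1 := hasDerivAt_mixtureMoment_one (x := x) ht (fun k => (hw k).le) hws
  have hlog : deriv (fun r => log (mixtureMoment w x t 0 r)) =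
      fun r => mixtureMoment w x t 1 r / t / mixtureMoment w x t 0 r :=
    funext fun r => ((h0 r).log (hpos r).ne').deriv
  rw [iteratedDeriv_succ, iteratedDeriv_one, hlog,
    (((h1 s).div_const t).fun_div (h0 s) (hpos s).ne').deriv, mixtureVariance]
  have := (hpos s).ne'
  field_simp
  ring

end MixtureMoment

section Balance

variable {t : ℝ}

lemma exists_ge_mul_gaussBump_lt (ht : 0 < t) {c c' a b : ℝ} (hc : c < c') (ha : 0 < a)
    (hb : 0 < b) : ∃ s, c' ≤ s ∧ a * gaussBump t c s < b * gaussBump t c' s := by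
  -- `log (gaussBump t c' s / gaussBump t c s) = (c' - c) (2s - c - c') / 2t` is linear in `s`
  set L := log (a / b)
  set s := c' + t * (|L| + 1) / (c' - c)
  have hu : (c' - c) * (s - c') = t * (|L| + 1) := by
    simp only [s]; field_simp [(sub_pos.2 hc).ne']; ring
  have hexp : L < ((s - c) ^ 2 - (s - c') ^ 2) / (2 * t) := by
    rw [lt_div_iff₀ (by positivity)]
    nlinarith [le_abs_self L, sq_nonneg (c' - c)]
  refine ⟨s, le_add_of_nonneg_right (by have := sub_pos.2 hc; positivity), ?_⟩
  calc a * gaussBump t c s = b * exp (L + -(s - c) ^ 2 / (2 * t)) := by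
        rw [exp_add, exp_log (div_pos ha hb), gaussBump]; field_simp
    _ < b * gaussBump t c' s := by
        refine mul_lt_mul_of_pos_left (exp_lt_exp.2 ?_) hb
        rw [sub_div] at hexp
        linarith [neg_div (2 * t) ((s - c) ^ 2), neg_div (2 * t) ((s - c') ^ 2)]

lemma exists_le_mul_gaussBump_lt (ht : 0 < t) {c c' a b : ℝ} (hc : c < c') (ha : 0 < a)
    (hb : 0 < b) : ∃ s, s ≤ c ∧ a * gaussBump t c' s < b * gaussBump t c s := by
  obtain ⟨s, hs, hlt⟩ := exists_ge_mul_gaussBump_lt ht (neg_lt_neg hc) ha hb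
  refine ⟨-s, by linarith, ?_⟩
  rwa [← gaussBump_neg t c', ← gaussBump_neg t c, neg_neg]

end Balance

section Mixture

variable {w x : ℕ → ℝ} {t : ℝ}

lemma two_mul_sum_range_le_mixtureMoment (ht : 0 < t) (hw : ∀ k, 0 ≤ w k) (hws : Summable w)
    (hx : Monotone x) {k : ℕ} {s : ℝ} (hs : x (k + 1) ≤ s)
    (hlt : (∑' i, w i) * gaussBump t (x k) s < w (k + 1) * gaussBump t (x (k + 1)) s) :
    2 * ∑ i ∈ range (k + 1), w i * gaussBump t (x i) s ≤ mixtureMoment w x t 0 s := by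
  have hhead : ∑ i ∈ range (k + 1), w i * gaussBump t (x i) s ≤
      (∑' i, w i) * gaussBump t (x k) s := by
    rw [← tsum_mul_right]
    refine (sum_le_sum fun i hi => mul_le_mul_of_nonneg_left ?_ (hw i)).trans
      ((hws.mul_right _).sum_le_tsum _ fun i _ => mul_nonneg (hw i) (gaussBump_pos _ _ _).le)
    have := hx (Nat.lt_succ_iff.1 (mem_range.1 hi))
    exact gaussBump_le_gaussBump ht (by
      rw [abs_of_nonneg, abs_of_nonneg] <;> linarith [hx k.le_succ])
  have hall : ∑ i ∈ range (k + 2), w i * gaussBump t (x i) s ≤ mixtureMoment w x t 0 s := by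
    rw [mixtureMoment_zero]
    exact (by simpa using summable_mixtureMoment_term ht hw hws (n := 0) (by omega) s :
      Summable fun i => w i * gaussBump t (x i) s).sum_le_tsum _
      fun i _ => mul_nonneg (hw i) (gaussBump_pos _ _ _).le
  rw [sum_range_succ] at hall
  linarith

lemma mixtureMoment_le_two_mul_sum_range (ht : 0 < t) (hw : ∀ k, 0 ≤ w k) (hws : Summable w)
    (hx : Monotone x) {k : ℕ} {s : ℝ} (hs : s ≤ x k)
    (hlt : (∑' i, w i) * gaussBump t (x (k + 1)) s < w k * gaussBump t (x k) s) :
    mixtureMoment w x t 0 s ≤ 2 * ∑ i ∈ range (k + 1), w i * gaussBump t (x i) s := by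
  have hsum : Summable fun i => w i * gaussBump t (x i) s := by
    simpa using summable_mixtureMoment_term ht hw hws (n := 0) (by omega) s
  have hhead : w k * gaussBump t (x k) s ≤ ∑ i ∈ range (k + 1), w i * gaussBump t (x i) s :=
    single_le_sum (fun i _ => mul_nonneg (hw i) (gaussBump_pos _ _ _).le) (self_mem_range_succ k)
  have htail : ∑' j, w (j + (k + 1)) * gaussBump t (x (j + (k + 1))) s ≤
      (∑' i, w i) * gaussBump t (x (k + 1)) s := by
    refine (Summable.tsum_le_tsum (g := fun j => w (j + (k + 1)) * gaussBump t (x (k + 1)) s)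
      (fun j => mul_le_mul_of_nonneg_left ?_ (hw _)) ((summable_nat_add_iff _).2 hsum)
      (((summable_nat_add_iff _).2 hws).mul_right _)).trans ?_
    · exact gaussBump_le_gaussBump ht (by
        rw [abs_of_nonpos, abs_of_nonpos] <;>
          linarith [hx (Nat.le_add_left (k + 1) j), hx k.le_succ])
    · rw [tsum_mul_right]
      exact mul_le_mul_of_nonneg_right
        (tsum_comp_le_tsum_of_inj hws hw (add_left_injective _)) (gaussBump_pos _ _ _).le
  have := hsum.sum_add_tsum_nat_add (k + 1)
  rw [mixtureMoment_zero]
  linarith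

/-- Far to the right of `x k < x (k + 1)` the atoms up to `k` carry less than half of the posterior
mass, far to the left more than half. -/
lemma exists_two_mul_sum_range_eq_mixtureMoment (ht : 0 < t) (hw : ∀ k, 0 < w k)
    (hws : Summable w) (hx : Monotone x) {k : ℕ} (hk : x k < x (k + 1)) :
    ∃ s, 2 * ∑ i ∈ range (k + 1), w i * gaussBump t (x i) s = mixtureMoment w x t 0 s := by
  have hw0 : ∀ i, 0 ≤ w i := fun i => (hw i).le
  have hW : 0 < ∑' i, w i := hws.tsum_pos hw0 0 (hw 0)
  obtain ⟨s₁, hs₁, hlt₁⟩ := exists_ge_mul_gaussBump_lt ht hk hW (hw (k + 1))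
  obtain ⟨s₀, hs₀, hlt₀⟩ := exists_le_mul_gaussBump_lt ht hk hW (hw k)
  have hcont : Continuous fun s =>
      2 * ∑ i ∈ range (k + 1), w i * gaussBump t (x i) s - mixtureMoment w x t 0 s :=
    ((continuous_finsetSum _ fun i _ => by unfold gaussBump; fun_prop).const_mul 2).sub
      (continuous_mixtureMoment ht hw0 hws (by omega))
  obtain ⟨s, hs⟩ := intermediate_value_univ s₁ s₀ hcont
    ⟨sub_nonpos.2 (two_mul_sum_range_le_mixtureMoment ht hw0 hws hx hs₁ hlt₁),
      sub_nonneg.2 (mixtureMoment_le_two_mul_sum_range ht hw0 hws hx hs₀ hlt₀)⟩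
  exact ⟨s, sub_eq_zero.1 hs⟩

theorem exists_le_mixtureVariance (ht : 0 < t) (hw : ∀ k, 0 < w k) (hws : Summable w)
    (hx : Monotone x) (hgap : ∀ C, ∃ k, C ≤ x (k + 1) - x k) (C : ℝ) :
    ∃ s, C ≤ mixtureVariance w x t s := by
  have hw0 : ∀ i, 0 ≤ w i := fun i => (hw i).le
  obtain ⟨k, hk⟩ := hgap (8 * |C| + 1)
  obtain ⟨s, hs⟩ := exists_two_mul_sum_range_eq_mixtureMoment ht hw hws hx
    (k := k) (by linarith [abs_nonneg C])
  have hvar := half_sq_le_variance (p := fun i => w i * gaussBump t (x i) s)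
    (y := fun i => x i - s) (S := range (k + 1)) (m := (x k + x (k + 1)) / 2 - s)
    (δ := (x (k + 1) - x k) / 2)
    (fun i => mul_nonneg (hw0 i) (gaussBump_pos _ _ _).le)
    (by simpa using summable_mixtureMoment_term (x := x) ht hw0 hws (n := 0) (by omega) s)
    (by simpa using summable_mixtureMoment_term (x := x) ht hw0 hws (n := 1) (by omega) s)
    (summable_mixtureMoment_term (x := x) ht hw0 hws (n := 2) le_rfl s)
    (by simpa [mixtureMoment_zero] using mixtureMoment_zero_pos (x := x) ht hw hws s)
    (by linarith [abs_nonneg C])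
    (fun i hi => by linarith [hx (Nat.lt_succ_iff.1 (mem_range.1 hi))])
    (fun i hi => by linarith [hx (Nat.succ_le_of_lt (not_lt.1 (mt mem_range.2 hi)))])
    (by rw [hs, mixtureMoment_zero])
  have hC : C ≤ ((x (k + 1) - x k) / 2) ^ 2 / 2 := by
    nlinarith [abs_nonneg C, le_abs_self C]
  refine ⟨s, hC.trans ?_⟩
  simpa only [mixtureVariance, mixtureMoment, pow_zero, pow_one, mul_one] using hvar

end Mixture

lemma iteratedFDeriv_smul_const_eq_iteratedDeriv {𝕜 E F : Type*} [NontriviallyNormedField 𝕜]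
    [NormedAddCommGroup E] [NormedSpace 𝕜 E] [NormedAddCommGroup F] [NormedSpace 𝕜 F]
    {f : E → F} {n : ℕ} (hf : ContDiff 𝕜 n f) (e : E) (s : 𝕜) :
    iteratedFDeriv 𝕜 n f (s • e) (fun _ => e) = iteratedDeriv n (fun r => f (r • e)) s := by
  have h := congrArg (· fun _ => (1 : 𝕜))
    ((ContinuousLinearMap.toSpanSingleton 𝕜 e).iteratedFDeriv_comp_right hf s le_rfl)
  simpa [Function.comp_def, iteratedDeriv_eq_iteratedFDeriv] using h.symm

lemma isProbabilityMeasure_sum_dirac {ι X : Type*} [MeasurableSpace X] {w : ι → ℝ}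
    (hw : ∀ i, 0 ≤ w i) (hws : Summable w) (hw1 : ∑' i, w i = 1) (p : ι → X) :
    IsProbabilityMeasure (Measure.sum fun i => ENNReal.ofReal (w i) • Measure.dirac (p i)) := by
  constructor
  simp [Measure.sum_apply _ MeasurableSet.univ, ← ENNReal.ofReal_tsum_of_nonneg hw hws, hw1]

lemma exists_pos_tsum_eq_one_summable_mul (c : ℕ → ℝ) (hc : ∀ k, 0 ≤ c k) :
    ∃ w : ℕ → ℝ, (∀ k, 0 < w k) ∧ Summable w ∧ ∑' k, w k = 1 ∧
      Summable fun k => w k * c k := by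
  set a : ℕ → ℝ := fun k => (1 / 2) ^ k / (1 + c k)
  have ha : ∀ k, 0 < a k := fun k => div_pos (by positivity) (by linarith [hc k])
  have hgeo : Summable fun k : ℕ => ((1 : ℝ) / 2) ^ k := summable_geometric_two
  have hac : ∀ k, a k * c k ≤ (1 / 2) ^ k := fun k => by
    rw [div_mul_eq_mul_div, div_le_iff₀ (by linarith [hc k])]
    nlinarith [pow_pos (one_half_pos (α := ℝ)) k]
  have has : Summable a := hgeo.of_nonneg_of_le (fun k => (ha k).le) fun k =>
    div_le_self (by positivity) (by linarith [hc k])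
  have hS : 0 < ∑' k, a k := has.tsum_pos (fun k => (ha k).le) 0 (ha 0)
  refine ⟨fun k => a k / ∑' k, a k, fun k => div_pos (ha k) hS, has.div_const _, ?_, ?_⟩
  · rw [tsum_div_const, div_self hS.ne']
  · exact (hgeo.of_nonneg_of_le (fun k => mul_nonneg (ha k).le (hc k)) hac).div_const (∑' k, a k)
      |>.congr fun k => by ring

section HeatFlow

variable {d : ℕ} {t : ℝ} {e : EuclideanSpace ℝ (Fin d)} {w x : ℕ → ℝ}

lemma gaussDensity_sub_smul (he : ‖e‖ = 1) (z : EuclideanSpace ℝ (Fin d)) (r : ℝ) :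
    gaussDensity t (z - r • e) = (2 * π * t) ^ (-(d : ℝ) / 2) *
      exp (-(‖z‖ ^ 2 - ⟪e, z⟫ ^ 2) / (2 * t)) * gaussBump t r ⟪e, z⟫ := by
  have hnorm : ‖z - r • e‖ ^ 2 = (‖z‖ ^ 2 - ⟪e, z⟫ ^ 2) + (⟪e, z⟫ - r) ^ 2 := by
    rw [norm_sub_sq_real, real_inner_smul_right, norm_smul, he, Real.norm_eq_abs, mul_one,
      sq_abs, real_inner_comm]
    ring
  rw [gaussDensity, gaussBump, hnorm, mul_assoc ((2 * π * t) ^ _), ← exp_add]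
  ring_nf

lemma heatConvMeas_sum_dirac_smul (hw : ∀ k, 0 ≤ w k) (he : ‖e‖ = 1)
    (z : EuclideanSpace ℝ (Fin d)) :
    heatConvMeas (Measure.sum fun k => ENNReal.ofReal (w k) • Measure.dirac (x k • e)) t z =
      (2 * π * t) ^ (-(d : ℝ) / 2) * exp (-(‖z‖ ^ 2 - ⟪e, z⟫ ^ 2) / (2 * t)) *
        mixtureMoment w x t 0 ⟪e, z⟫ := by
  rw [heatConvMeas, integral_sum_dirac fun k => ENNReal.ofReal_ne_top, mixtureMoment_zero,
    ← tsum_mul_left]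
  congr 1 with k
  rw [ENNReal.toReal_ofReal (hw k), smul_eq_mul, gaussDensity_sub_smul he]
  ring

lemma iteratedFDeriv_two_log_heatConvMeas_sum_dirac_smul (ht : 0 < t) (hw : ∀ k, 0 < w k)
    (hws : Summable w) (he : ‖e‖ = 1) (s : ℝ) :
    iteratedFDeriv ℝ 2
        (fun y => log (heatConvMeas
          (Measure.sum fun k => ENNReal.ofReal (w k) • Measure.dirac (x k • e)) t y))
        (s • e) ![e, e] =
      mixtureVariance w x t s / t ^ 2 - 1 / t := by
  set μ := Measure.sum fun k => ENNReal.ofReal (w k) • Measure.dirac (x k • e)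
  set c := (2 * π * t) ^ (-(d : ℝ) / 2)
  have hc : 0 < c := by positivity
  have hpos := mixtureMoment_zero_pos (x := x) ht hw hws
  set F : EuclideanSpace ℝ (Fin d) → ℝ :=
    fun y => log c + -(‖y‖ ^ 2 - ⟪e, y⟫ ^ 2) / (2 * t) + log (mixtureMoment w x t 0 ⟪e, y⟫)
  have hlog : (fun y => log (heatConvMeas μ t y)) = F := by
    funext y
    rw [heatConvMeas_sum_dirac_smul (fun k => (hw k).le) he, log_mul (by positivity) (hpos _).ne',
      log_mul hc.ne' (exp_pos _).ne', log_exp]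
  have hcd : ContDiff ℝ 2 F := by
    have hinner : ContDiff ℝ 2 fun y : EuclideanSpace ℝ (Fin d) => ⟪e, y⟫ :=
      (innerSL ℝ e).contDiff
    exact (contDiff_const.add (((contDiff_norm_sq ℝ).sub (hinner.pow 2)).neg.div_const _)).add
      (((contDiff_mixtureMoment_zero ht (fun k => (hw k).le) hws).log fun r => (hpos r).ne').comp
        hinner)
  have hline : (fun r : ℝ => F (r • e)) = fun r => log c + log (mixtureMoment w x t 0 r) := by
    funext r
    simp [F, real_inner_smul_right, norm_smul, he]
  have hvec : ![e, e] = fun _ => e := by ext i : 1; fin_cases i <;> rfl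
  rw [hlog, hvec, iteratedFDeriv_smul_const_eq_iteratedDeriv hcd, hline]
  exact (iteratedDeriv_const_add two_pos _).trans
    (iteratedDeriv_two_log_mixtureMoment_zero ht hw hws s)

end HeatFlow

theorem no_log_concavity_from_tail_decay_multidim_general
    (d : ℕ) (hd : 1 ≤ d)
    (Ψ : ℝ → ℝ) :
    ∃ μ : Measure (EuclideanSpace ℝ (Fin d)), IsProbabilityMeasure μ ∧
      Integrable (fun x => Real.exp (Ψ ‖x‖)) μ ∧
      ∀ t : ℝ, 0 < t →
        ¬ BddBelow {r : ℝ | ∃ z w : EuclideanSpace ℝ (Fin d), ‖w‖ = 1 ∧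
            r = -(iteratedFDeriv ℝ 2 (fun y => Real.log (heatConvMeas μ t y)) z ![w, w])} := by
  set e : EuclideanSpace ℝ (Fin d) := EuclideanSpace.single ⟨0, hd⟩ 1
  have he : ‖e‖ = 1 := by simp [e]
  set x : ℕ → ℝ := fun k => (k : ℝ) ^ 2
  have hx : Monotone x := fun i j hij => by simp only [x]; gcongr
  have hgap : ∀ C, ∃ k, C ≤ x (k + 1) - x k := fun C => by
    obtain ⟨k, hk⟩ := exists_nat_ge C
    exact ⟨k, by simp only [x]; push_cast; nlinarith⟩
  obtain ⟨w, hw, hws, hw1, hwΨ⟩ :=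
    exists_pos_tsum_eq_one_summable_mul (fun k => ‖exp (Ψ ‖x k • e‖)‖) fun k => norm_nonneg _
  refine ⟨Measure.sum fun k => ENNReal.ofReal (w k) • Measure.dirac (x k • e),
    isProbabilityMeasure_sum_dirac (fun k => (hw k).le) hws hw1 _,
    (integrable_sum_dirac_iff fun k => ENNReal.ofReal_ne_top).2 ?_, fun t ht => ?_⟩
  · simpa [ENNReal.toReal_ofReal (hw _).le] using hwΨ
  rw [not_bddBelow_iff]
  intro L
  obtain ⟨s, hs⟩ := exists_le_mixtureVariance (x := x) ht hw hws hx hgap (t ^ 2 * (1 / t - L + 1))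
  refine ⟨_, ⟨s • e, e, he, rfl⟩, ?_⟩
  rw [iteratedFDeriv_two_log_heatConvMeas_sum_dirac_smul ht hw hws he]
  have : 1 / t - L + 1 ≤ mixtureVariance w x t s / t ^ 2 := by
    rwa [le_div_iff₀ (by positivity), mul_comm]
  linarith

/-- **Negative result in arbitrary dimension.** For every `d ≥ 1` and non-decreasing
`Ψ : ℝ_{≥0} → ℝ_{≥0}` there is a probability measure `μ` on `ℝ^d` with
`∫ e^{Ψ(‖x‖)} dμ(x) < ∞` such that for every `t > 0`
`inf_{z, ‖w‖=1} ⟨w, -∇² log(μ*γ_t)(z) w⟩ = -∞`. -/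
theorem no_log_concavity_from_tail_decay_multidim
    (d : ℕ) (hd : 1 ≤ d)
    (Ψ : ℝ → ℝ) (hmono : MonotoneOn Ψ (Set.Ici 0))
    (hnonneg : ∀ x ∈ Set.Ici (0 : ℝ), 0 ≤ Ψ x) :
    ∃ μ : Measure (EuclideanSpace ℝ (Fin d)), IsProbabilityMeasure μ ∧
      Integrable (fun x => Real.exp (Ψ ‖x‖)) μ ∧
      ∀ t : ℝ, 0 < t →
        ¬ BddBelow {r : ℝ | ∃ z w : EuclideanSpace ℝ (Fin d), ‖w‖ = 1 ∧
            r = -(iteratedFDeriv ℝ 2 (fun y => Real.log (heatConvMeas μ t y)) z ![w, w])} :=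
  no_log_concavity_from_tail_decay_multidim_general d hd Ψ
end
end

section
/- Let U ∈ C²(ℝ^d) be such that for some α, β, R ≥ 0 one has ∇²U(x) ≽ α·I_d whenever ‖x‖ ≥ R and ∇²U(x) ≽ −β·I_d whenever ‖x‖ < R. Then there exist V, H ∈ C¹(ℝ^d) with U = V + H, such that V is α-convex and H is 2(α+β)R-Lipschitz. -/
/-!
Put `c = α + β` and `φ z = huber R ‖z‖`, which is `‖z‖²/2` on the ball of radius `R` and
`R‖z‖ - R²/2` outside it, so that `φ` is `C¹` and `R`-Lipschitz; take `V = U + cφ`, `H = -cφ`.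
Inside the ball `V - α‖·‖²/2 = U + β‖·‖²/2`, and outside it equals
`(U - α‖·‖²/2) + cR‖·‖ - cR²/2`; the Hessian bounds make both convex along every line, the second
thanks to the convexity of the norm. A line meets the sphere in at most two points (the roots of a
quadratic), so the derivative of the `C¹` restriction of `V - α‖·‖²/2` to the line is monotone on
each of the three closed pieces, hence on the whole line.
-/

noncomputable section
open Real MeasureTheory

open Set Filter Topology Asymptotics
open scoped RealInnerProductSpace

lemma hasDerivAt_max_zero_sq (t : ℝ) : HasDerivAt (fun s : ℝ => max s 0 ^ 2) (2 * max t 0) t := by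
  rcases lt_trichotomy t 0 with ht | rfl | ht
  · have hloc : (fun s : ℝ => max s 0 ^ 2) =ᶠ[𝓝 t] fun _ => 0 := by
      filter_upwards [eventually_lt_nhds ht] with s hs
      simp [max_eq_right hs.le]
    simpa [max_eq_right ht.le] using (hasDerivAt_const t (0 : ℝ)).congr_of_eventuallyEq hloc
  · -- `max h 0 ^ 2 ≤ h ^ 2 = o(h)`
    rw [hasDerivAt_iff_isLittleO_nhds_zero]
    refine IsBigO.trans_isLittleO ?_ (isLittleO_pow_id one_lt_two)
    refine IsBigO.of_bound 1 (Eventually.of_forall fun h => ?_)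
    rcases le_total h 0 with hh | hh <;> simp [hh, sq_nonneg]
  · have hloc : (fun s : ℝ => max s 0 ^ 2) =ᶠ[𝓝 t] fun s => s ^ 2 := by
      filter_upwards [eventually_gt_nhds ht] with s hs
      rw [max_eq_left hs.le]
    simpa [max_eq_left ht.le] using (hasDerivAt_pow 2 t).congr_of_eventuallyEq hloc

lemma contDiff_max_zero_sq : ContDiff ℝ 1 (fun s : ℝ => max s 0 ^ 2) := by
  rw [contDiff_one_iff_deriv, funext fun t => (hasDerivAt_max_zero_sq t).deriv]
  exact ⟨fun t => (hasDerivAt_max_zero_sq t).differentiableAt, by fun_prop⟩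

def huber (R r : ℝ) : ℝ := r ^ 2 / 2 - max (r - R) 0 ^ 2 / 2

lemma huber_of_le {R r : ℝ} (h : r ≤ R) : huber R r = r ^ 2 / 2 := by
  simp [huber, max_eq_right (sub_nonpos.mpr h)]

lemma huber_of_ge {R r : ℝ} (h : R ≤ r) : huber R r = R * r - R ^ 2 / 2 := by
  rw [huber, max_eq_left (sub_nonneg.mpr h)]
  ring

lemma abs_huber_sub_huber_le {R r s : ℝ} (hR : 0 ≤ R) (hr : 0 ≤ r) (hs : 0 ≤ s) :
    |huber R r - huber R s| ≤ R * |r - s| := by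
  wlog hsr : s ≤ r generalizing r s
  · rw [abs_sub_comm, abs_sub_comm r]
    exact this hs hr (le_of_not_ge hsr)
  rw [abs_of_nonneg (sub_nonneg.mpr hsr), abs_le]
  rcases le_total r R with hrR | hrR <;> rcases le_total s R with hsR | hsR <;>
    simp only [huber_of_le, huber_of_ge, *] <;> constructor <;> nlinarith

lemma lipschitzWith_huber_norm {E : Type*} [SeminormedAddCommGroup E] {R : ℝ} (hR : 0 ≤ R) :
    LipschitzWith R.toNNReal (fun z : E => huber R ‖z‖) :=
  LipschitzWith.of_dist_le_mul fun z w => by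
    rw [Real.dist_eq, dist_eq_norm_sub, Real.coe_toNNReal _ hR]
    exact (abs_huber_sub_huber_le hR (norm_nonneg z) (norm_nonneg w)).trans
      (mul_le_mul_of_nonneg_left (abs_norm_sub_norm_le z w) hR)

lemma contDiff_huber_norm {E : Type*} [NormedAddCommGroup E] [InnerProductSpace ℝ E] {R : ℝ}
    (hR : 0 ≤ R) : ContDiff ℝ 1 (fun z : E => huber R ‖z‖) := by
  rcases hR.eq_or_lt with rfl | hR
  · simpa [huber] using contDiff_const (c := (0 : ℝ))
  have hmax : ContDiff ℝ 1 (fun z : E => max (‖z‖ - R) 0 ^ 2) := by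
    refine contDiff_iff_contDiffAt.mpr fun z => ?_
    rcases lt_or_ge ‖z‖ R with hz | hz
    · refine (contDiffAt_const (c := (0 : ℝ))).congr_of_eventuallyEq ?_
      filter_upwards [(isOpen_lt continuous_norm continuous_const).mem_nhds hz] with w hw
      simp [max_eq_right (sub_nonpos.mpr (le_of_lt hw))]
    · have hz0 : z ≠ 0 := norm_pos_iff.mp (hR.trans_le hz)
      exact contDiff_max_zero_sq.contDiffAt.comp z ((contDiffAt_norm ℝ hz0).sub contDiffAt_const)
  exact ((contDiff_norm_sq ℝ).div_const 2).sub (hmax.div_const 2)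

lemma quadratic_pos_or_eq_mul_sub_mul_sub {A B C : ℝ} (hA : 0 < A) :
    (∀ t, 0 < A * (t * t) + B * t + C) ∨
      ∃ a b, a ≤ b ∧ ∀ t, A * (t * t) + B * t + C = A * ((t - a) * (t - b)) := by
  rcases lt_or_ge (discrim A B C) 0 with hD | hD
  · left
    intro t
    rw [discrim] at hD
    nlinarith [sq_nonneg (2 * A * t + B)]
  · right
    set s := √(discrim A B C)
    have hs : s ^ 2 = B ^ 2 - 4 * A * C := Real.sq_sqrt hD
    refine ⟨(-B - s) / (2 * A), (-B + s) / (2 * A), ?_, fun t => ?_⟩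
    · gcongr
      linarith [Real.sqrt_nonneg (discrim A B C)]
    · field_simp
      linear_combination hs

lemma monotone_of_monotoneOn_Iic_Icc_Ici {α β : Type*} [LinearOrder α] [Preorder β] {f : α → β}
    {a b : α} (hab : a ≤ b) (h₁ : MonotoneOn f (Iic a)) (h₂ : MonotoneOn f (Icc a b))
    (h₃ : MonotoneOn f (Ici b)) : Monotone f := by
  have h₁₂ := h₁.union_right h₂ isGreatest_Iic (isLeast_Icc hab)
  rw [Iic_union_Icc_eq_Iic hab] at h₁₂
  exact h₁₂.Iic_union_Ici h₃

lemma convexOn_univ_of_convexOn_comp_line {E : Type*} [AddCommGroup E] [Module ℝ E] {W : E → ℝ}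
    (h : ∀ x v : E, ConvexOn ℝ univ fun t : ℝ => W (x + t • v)) : ConvexOn ℝ univ W := by
  refine ⟨convex_univ, fun x _ y _ a b ha hb hab => ?_⟩
  have hxy : x + b • (y - x) = a • x + b • y := by
    rw [eq_sub_of_add_eq hab]
    module
  simpa [hxy] using (h x (y - x)).2 (mem_univ 0) (mem_univ 1) ha hb hab

section Line

variable {E F : Type*} [NormedAddCommGroup E] [NormedSpace ℝ E] [NormedAddCommGroup F]
  [NormedSpace ℝ F]

lemma hasDerivAt_add_smul (x v : E) (t : ℝ) : HasDerivAt (fun s : ℝ => x + s • v) v t := by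
  simpa using ((hasDerivAt_id t).smul_const v).const_add x

lemma hasDerivAt_comp_line {U : E → F} (hU : Differentiable ℝ U) (x v : E) (t : ℝ) :
    HasDerivAt (fun s : ℝ => U (x + s • v)) (fderiv ℝ U (x + t • v) v) t :=
  (hU _).hasFDerivAt.comp_hasDerivAt t (hasDerivAt_add_smul x v t)

lemma hasDerivAt_fderiv_comp_line {U : E → F} (hU : ContDiff ℝ 2 U) (x v : E) (t : ℝ) :
    HasDerivAt (fun s : ℝ => fderiv ℝ U (x + s • v) v)
      (iteratedFDeriv ℝ 2 U (x + t • v) ![v, v]) t := by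
  have hD : Differentiable ℝ (fderiv ℝ U) :=
    (hU.fderiv_right (le_refl 2)).differentiable one_ne_zero
  rw [iteratedFDeriv_two_apply]
  exact (hasDerivAt_comp_line hD x v t).clm_apply (hasDerivAt_const t v) |>.congr_deriv (by simp)

end Line

section Convexity

variable {E : Type*} [NormedAddCommGroup E] [InnerProductSpace ℝ E]

lemma norm_add_smul_sq (x v : E) (t : ℝ) :
    ‖x + t • v‖ ^ 2 = ‖v‖ ^ 2 * (t * t) + 2 * ⟪x, v⟫ * t + ‖x‖ ^ 2 := by
  rw [norm_add_sq_real, norm_smul, inner_smul_right, Real.norm_eq_abs, mul_pow, sq_abs]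
  ring

lemma convexOn_comp_line_add_sq {U : E → ℝ} (hU : ContDiff ℝ 2 U) (κ : ℝ) {x v : E} {T : Set ℝ}
    (hT : Convex ℝ T)
    (hU' : ∀ t ∈ interior T, -κ * ‖v‖ ^ 2 ≤ iteratedFDeriv ℝ 2 U (x + t • v) ![v, v]) :
    ConvexOn ℝ T fun t => U (x + t • v) + κ / 2 * ‖x + t • v‖ ^ 2 := by
  have h₁ (t : ℝ) : HasDerivAt (fun s => U (x + s • v) + κ / 2 * ‖x + s • v‖ ^ 2)
      (fderiv ℝ U (x + t • v) v + κ * ⟪x + t • v, v⟫) t :=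
    ((hasDerivAt_comp_line (hU.differentiable two_ne_zero) x v t).add
      ((hasDerivAt_add_smul x v t).norm_sq.const_mul (κ / 2))).congr_deriv (by ring)
  have h₂ (t : ℝ) : HasDerivAt (fun s => fderiv ℝ U (x + s • v) v + κ * ⟪x + s • v, v⟫)
      (iteratedFDeriv ℝ 2 U (x + t • v) ![v, v] + κ * ‖v‖ ^ 2) t :=
    ((hasDerivAt_fderiv_comp_line hU x v t).add
      (((hasDerivAt_add_smul x v t).inner ℝ (hasDerivAt_const t v)).const_mul κ)).congr_deriv
      (by simp)
  have hcont : Continuous fun t => U (x + t • v) + κ / 2 * ‖x + t • v‖ ^ 2 :=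
    Differentiable.continuous fun t => (h₁ t).differentiableAt
  refine convexOn_of_hasDerivWithinAt2_nonneg hT hcont.continuousOn
    (fun t _ => (h₁ t).hasDerivWithinAt) (fun t _ => (h₂ t).hasDerivWithinAt) fun t ht => ?_
  linarith [hU' t ht]

lemma forall_lt_norm_add_smul_or_exists_Icc {R : ℝ} (hR : 0 ≤ R) (x : E) {v : E} (hv : v ≠ 0) :
    (∀ t : ℝ, R < ‖x + t • v‖) ∨
      ∃ a b : ℝ, a ≤ b ∧ (∀ t ∉ Ioo a b, R ≤ ‖x + t • v‖) ∧ (∀ t ∈ Icc a b, ‖x + t • v‖ ≤ R) ∧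
        ∀ t ∈ Ioo a b, ‖x + t • v‖ < R := by
  have hv2 : 0 < ‖v‖ ^ 2 := by positivity
  rcases quadratic_pos_or_eq_mul_sub_mul_sub (B := 2 * ⟪x, v⟫) (C := ‖x‖ ^ 2 - R ^ 2) hv2 with
    hpos | ⟨a, b, hab, hfac⟩
  · refine Or.inl fun t => lt_of_pow_lt_pow_left₀ 2 (norm_nonneg _) ?_
    linarith [hpos t, norm_add_smul_sq x v t]
  · have key (t : ℝ) : ‖x + t • v‖ ^ 2 - R ^ 2 = ‖v‖ ^ 2 * ((t - a) * (t - b)) := by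
      linarith [hfac t, norm_add_smul_sq x v t]
    refine Or.inr ⟨a, b, hab, fun t ht => ?_, fun t ht => ?_, fun t ht => ?_⟩
    · refine le_of_pow_le_pow_left₀ two_ne_zero (norm_nonneg _) ?_
      have hsign : 0 ≤ (t - a) * (t - b) := by
        rcases le_or_gt t a with h | h
        · exact mul_nonneg_of_nonpos_of_nonpos (by linarith) (by linarith)
        · have : b ≤ t := le_of_not_gt fun h' => ht ⟨h, h'⟩
          exact mul_nonneg (by linarith) (by linarith)
      linarith [key t, mul_nonneg hv2.le hsign]
    · refine (pow_le_pow_iff_left₀ (norm_nonneg _) hR two_ne_zero).mp ?_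
      have hsign : (t - a) * (t - b) ≤ 0 :=
        mul_nonpos_of_nonneg_of_nonpos (by linarith [ht.1]) (by linarith [ht.2])
      linarith [key t, mul_nonpos_of_nonneg_of_nonpos hv2.le hsign]
    · refine lt_of_pow_lt_pow_left₀ 2 hR ?_
      have hsign : (t - a) * (t - b) < 0 :=
        mul_neg_of_pos_of_neg (by linarith [ht.1]) (by linarith [ht.2])
      linarith [key t, mul_neg_of_pos_of_neg hv2 hsign]

lemma convexOn_norm_add_smul (x v : E) : ConvexOn ℝ univ fun t : ℝ => ‖x + t • v‖ := by
  have hline : (fun t : ℝ => ‖x + t • v‖) = norm ∘ AffineMap.lineMap x (x + v) := by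
    funext t
    simp [AffineMap.lineMap_apply, add_comm]
  rw [hline]
  exact convexOn_univ_norm.comp_affineMap _

variable {U : E → ℝ} {α β R : ℝ}

lemma convexOn_add_huber_comp_line_of_le_norm (hc : 0 ≤ α + β) (hR : 0 ≤ R) (hU : ContDiff ℝ 2 U)
    (hout : ∀ z : E, R ≤ ‖z‖ → ∀ w : E, α * ‖w‖ ^ 2 ≤ iteratedFDeriv ℝ 2 U z ![w, w])
    {x v : E} {T : Set ℝ} (hT : Convex ℝ T) (hTR : ∀ t ∈ T, R ≤ ‖x + t • v‖) :
    ConvexOn ℝ T fun t =>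
      U (x + t • v) + (α + β) * huber R ‖x + t • v‖ - α / 2 * ‖x + t • v‖ ^ 2 := by
  have hp := convexOn_comp_line_add_sq hU (-α) hT fun t ht => by
    simpa using hout _ (hTR t (interior_subset ht)) v
  have hn := ((convexOn_norm_add_smul x v).subset (subset_univ T) hT).smul (mul_nonneg hc hR)
  refine ((hp.add hn).add_const (-((α + β) * R ^ 2 / 2))).congr fun t ht => ?_
  simp only [Pi.add_apply, smul_eq_mul, huber_of_ge (hTR t ht)]
  ring

lemma convexOn_add_huber_comp_line_of_norm_le (hU : ContDiff ℝ 2 U)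
    (hin : ∀ z : E, ‖z‖ < R → ∀ w : E, -β * ‖w‖ ^ 2 ≤ iteratedFDeriv ℝ 2 U z ![w, w])
    {x v : E} {T : Set ℝ} (hT : Convex ℝ T) (hTR : ∀ t ∈ T, ‖x + t • v‖ ≤ R)
    (hTR' : ∀ t ∈ interior T, ‖x + t • v‖ < R) :
    ConvexOn ℝ T fun t =>
      U (x + t • v) + (α + β) * huber R ‖x + t • v‖ - α / 2 * ‖x + t • v‖ ^ 2 :=
  (convexOn_comp_line_add_sq hU β hT fun t ht => hin _ (hTR' t ht) v).congr fun t ht => by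
    simp only [huber_of_le (hTR t ht)]
    ring

lemma convexOn_add_huber_comp_line (hc : 0 ≤ α + β) (hR : 0 ≤ R) (hU : ContDiff ℝ 2 U)
    (hout : ∀ z : E, R ≤ ‖z‖ → ∀ w : E, α * ‖w‖ ^ 2 ≤ iteratedFDeriv ℝ 2 U z ![w, w])
    (hin : ∀ z : E, ‖z‖ < R → ∀ w : E, -β * ‖w‖ ^ 2 ≤ iteratedFDeriv ℝ 2 U z ![w, w])
    (x v : E) :
    ConvexOn ℝ univ fun t : ℝ =>
      U (x + t • v) + (α + β) * huber R ‖x + t • v‖ - α / 2 * ‖x + t • v‖ ^ 2 := by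
  rcases eq_or_ne v 0 with rfl | hv
  · simpa using convexOn_const (U x + (α + β) * huber R ‖x‖ - α / 2 * ‖x‖ ^ 2) convex_univ
  have hW : Differentiable ℝ fun z : E => U z + (α + β) * huber R ‖z‖ - α / 2 * ‖z‖ ^ 2 :=
    ((hU.differentiable two_ne_zero).add
      (((contDiff_huber_norm hR).differentiable one_ne_zero).const_mul _)).sub
      (((contDiff_norm_sq ℝ).differentiable one_ne_zero).const_mul _)
  have hu : Differentiable ℝ fun t : ℝ =>
      U (x + t • v) + (α + β) * huber R ‖x + t • v‖ - α / 2 * ‖x + t • v‖ ^ 2 :=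
    fun t => (hW _).comp t (hasDerivAt_add_smul x v t).differentiableAt
  rcases forall_lt_norm_add_smul_or_exists_Icc hR x hv with hR' | ⟨a, b, hab, hge, hle, hlt⟩
  · exact convexOn_add_huber_comp_line_of_le_norm hc hR hU hout convex_univ fun t _ => (hR' t).le
  refine Monotone.convexOn_univ_of_deriv hu (monotone_of_monotoneOn_Iic_Icc_Ici hab ?_ ?_ ?_) <;>
    refine ConvexOn.monotoneOn_deriv ?_ fun t _ => hu t
  · exact convexOn_add_huber_comp_line_of_le_norm hc hR hU hout (convex_Iic a) fun t ht =>
      hge t fun h => (mem_Iic.mp ht).not_gt h.1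
  · exact convexOn_add_huber_comp_line_of_norm_le hU hin (convex_Icc a b) hle
      (by rwa [interior_Icc])
  · exact convexOn_add_huber_comp_line_of_le_norm hc hR hU hout (convex_Ici b) fun t ht =>
      hge t fun h => (mem_Ici.mp ht).not_gt h.2

end Convexity

/-- **Lemma 7.** If `U ∈ C²(ℝ^d)` has Hessian `≽ α I_d` outside the ball of radius `R` and
`≽ -β I_d` inside it, then `U = V + H` with `V ∈ C¹` `α`-convex and `H ∈ C¹`
`2(α+β)R`-Lipschitz. -/
theorem decompose_pos_hessian_outside_ball
    (d : ℕ) (α β R : ℝ) (hα : 0 ≤ α) (hβ : 0 ≤ β) (hR : 0 ≤ R)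
    (U : EuclideanSpace ℝ (Fin d) → ℝ) (hU : ContDiff ℝ 2 U)
    (hout : ∀ x : EuclideanSpace ℝ (Fin d), R ≤ ‖x‖ →
      ∀ w : EuclideanSpace ℝ (Fin d), α * ‖w‖ ^ 2 ≤ iteratedFDeriv ℝ 2 U x ![w, w])
    (hin : ∀ x : EuclideanSpace ℝ (Fin d), ‖x‖ < R →
      ∀ w : EuclideanSpace ℝ (Fin d), -β * ‖w‖ ^ 2 ≤ iteratedFDeriv ℝ 2 U x ![w, w]) :
    ∃ V H : EuclideanSpace ℝ (Fin d) → ℝ,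
      ContDiff ℝ 1 V ∧ ContDiff ℝ 1 H ∧ (∀ x, U x = V x + H x) ∧
      ConvexOn ℝ Set.univ (fun x => V x - α / 2 * ‖x‖ ^ 2) ∧
      LipschitzWith (2 * (α + β) * R).toNNReal H := by
  have hc : 0 ≤ α + β := add_nonneg hα hβ
  have hφ := contDiff_huber_norm (E := EuclideanSpace ℝ (Fin d)) hR
  refine ⟨fun z => U z + (α + β) * huber R ‖z‖, fun z => -((α + β) * huber R ‖z‖),
    (hU.of_le one_le_two).add (contDiff_const.mul hφ), (contDiff_const.mul hφ).neg,
    fun z => by ring,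
    convexOn_univ_of_convexOn_comp_line (convexOn_add_huber_comp_line hc hR hU hout hin), ?_⟩
  refine ((lipschitzWith_smul (α + β)).comp (lipschitzWith_huber_norm hR)).neg.weaken ?_
  rw [← NNReal.coe_le_coe]
  push_cast
  rw [Real.coe_toNNReal _ hR, Real.coe_toNNReal _ (by positivity), Real.norm_of_nonneg hc]
  nlinarith [mul_nonneg hc hR]
end
end

section
/- Let μ = Σ_{i=1}^N α_i e^{−U_i} for some N ≥ 1, weights α_i > 0, and potentials U_i ∈ C²(ℝ^d) with e^{−U_i} ∈ L¹(ℝ^d), and assume ∇²U_i(x) ≽ K·I_d for all i and all x, for some K > 0. Then at every x ∈ ℝ^d, −∇² log μ(x) ≽ K·I_d − μ(x)^{−2} Σ_{i>j} α_i α_j e^{−U_i(x)−U_j(x)} (∇U_i(x) − ∇U_j(x))^{⊗2}, where v^{⊗2} denotes the rank-one matrix v vᵀ. -/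
/-!
Fix a direction `w` and write `gᵢ = αᵢ e^{-Uᵢ(x)}`, `sᵢ = DUᵢ(x) w`, `Hᵢ = D²Uᵢ(x)[w, w]`.
Differentiating `log μ` twice gives
`-D² log μ(x)[w, w] = (Σ gᵢ Hᵢ) / μ - ((Σ gᵢ sᵢ²) / μ - ((Σ gᵢ sᵢ) / μ)²)`.
The first term is a weighted average of the `Hᵢ ≥ K ‖w‖²`, and the second is the `g`-weighted
variance of `s`, which Lagrange's identity rewrites as `μ⁻² Σ_{i>j} gᵢ gⱼ (sᵢ - sⱼ)²`.
-/

open Real MeasureTheory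
open scoped RealInnerProductSpace

section SecondDerivative

variable {E F : Type*} [NormedAddCommGroup E] [NormedSpace ℝ E]
  [NormedAddCommGroup F] [NormedSpace ℝ F]

theorem iteratedFDeriv_two_apply_eq_fderiv_fderiv_apply {f : E → F} {x : E}
    (hf : DifferentiableAt ℝ (fderiv ℝ f) x) (v w : E) :
    iteratedFDeriv ℝ 2 f x ![v, w] = fderiv ℝ (fun y => fderiv ℝ f y w) x v := by
  simp [iteratedFDeriv_two_apply, fderiv_clm_apply hf (differentiableAt_const w)]

theorem ContDiff.differentiable_fderiv {f : E → F} (hf : ContDiff ℝ 2 f) :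
    Differentiable ℝ (fderiv ℝ f) :=
  (hf.fderiv_right (m := 1) le_rfl).differentiable one_ne_zero

theorem iteratedFDeriv_two_exp_apply {f : E → ℝ} (hf : ContDiff ℝ 2 f) (x w : E) :
    iteratedFDeriv ℝ 2 (fun y => exp (f y)) x ![w, w]
      = exp (f x) * (iteratedFDeriv ℝ 2 f x ![w, w] + fderiv ℝ f x w ^ 2) := by
  have hf1 : Differentiable ℝ f := hf.differentiable two_ne_zero
  have hexp : ContDiff ℝ 2 (fun y => exp (f y)) := hf.exp
  have hD : (fun y => fderiv ℝ (fun z => exp (f z)) y w) = fun y => exp (f y) * fderiv ℝ f y w :=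
    funext fun y => by simp [fderiv_exp (hf1 y)]
  rw [iteratedFDeriv_two_apply_eq_fderiv_fderiv_apply (hexp.differentiable_fderiv x), hD,
    fderiv_fun_mul (hf1.exp x) (hf.differentiable_fderiv.clm_apply (differentiable_const w) x),
    iteratedFDeriv_two_apply_eq_fderiv_fderiv_apply (hf.differentiable_fderiv x)]
  simp only [fderiv_exp (hf1 x), add_apply, smul_apply, smul_eq_mul]
  ring

theorem iteratedFDeriv_two_log_apply {f : E → ℝ} (hf : ContDiff ℝ 2 f) (hpos : ∀ y, 0 < f y)
    (x w : E) :
    iteratedFDeriv ℝ 2 (fun y => log (f y)) x ![w, w]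
      = iteratedFDeriv ℝ 2 f x ![w, w] / f x - (fderiv ℝ f x w / f x) ^ 2 := by
  have hlog : ContDiff ℝ 2 (fun y => log (f y)) := hf.log fun y => (hpos y).ne'
  -- `f = exp ∘ log f`, so the formula for `exp` can be solved for `D² log f`.
  have hexp_log : (fun y => exp (log (f y))) = f := funext fun y => exp_log (hpos y)
  have hexp_formula := iteratedFDeriv_two_exp_apply hlog x w
  rw [hexp_log, exp_log (hpos x), fderiv.log (hf.differentiable two_ne_zero x) (hpos x).ne',
    smul_apply, smul_eq_mul] at hexp_formula
  rw [hexp_formula]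
  field_simp [(hpos x).ne']
  ring

end SecondDerivative

open Finset

theorem Fintype.sum_prod_eq_two_nsmul_sum_filter_lt {ι M : Type*} [Fintype ι] [LinearOrder ι]
    [AddCommMonoid M] (F : ι × ι → M) (hswap : ∀ p, F p.swap = F p) (hdiag : ∀ i, F (i, i) = 0) :
    ∑ p, F p = 2 • ∑ p : ι × ι with p.2 < p.1, F p := by
  have hsplit : ∀ p : ι × ι,
      F p = (if p.2 < p.1 then F p else 0) + if p.1 < p.2 then F p else 0 := by
    rintro ⟨i, j⟩
    rcases lt_trichotomy i j with h | rfl | h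
    · simp [h, h.not_gt]
    · simp [hdiag]
    · simp [h, h.not_gt]
  have hmirror : ∑ p : ι × ι, (if p.1 < p.2 then F p else 0)
      = ∑ p : ι × ι, if p.2 < p.1 then F p else 0 :=
    Fintype.sum_equiv (Equiv.prodComm ι ι) _ _ fun p => by simp [hswap]
  rw [Finset.sum_congr rfl fun p _ => hsplit p, sum_add_distrib, hmirror, two_nsmul, sum_filter]

theorem sum_mul_sum_sub_sq_eq_sum_filter_lt {ι R : Type*} [Fintype ι] [LinearOrder ι] [Field R]
    [CharZero R] (g s : ι → R) :
    (∑ i, g i) * (∑ i, g i * s i ^ 2) - (∑ i, g i * s i) ^ 2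
      = ∑ p : ι × ι with p.2 < p.1, g p.1 * g p.2 * (s p.1 - s p.2) ^ 2 := by
  have hdouble := Fintype.sum_prod_eq_two_nsmul_sum_filter_lt
    (fun p : ι × ι => g p.1 * g p.2 * (s p.1 - s p.2) ^ 2)
    (fun p => by simp only [Prod.fst_swap, Prod.snd_swap]; ring) (by simp)
  have hexpand : ∀ i j, g i * g j * (s i - s j) ^ 2
      = g i * s i ^ 2 * g j + g i * (g j * s j ^ 2) - 2 * ((g i * s i) * (g j * s j)) :=
    fun i j => by ring
  rw [nsmul_eq_mul, Nat.cast_ofNat, Fintype.sum_prod_type] at hdouble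
  refine mul_left_cancel₀ (two_ne_zero (α := R)) ?_
  simp_rw [← hdouble, hexpand, sum_sub_distrib, sum_add_distrib, ← mul_sum, ← sum_mul]
  ring

theorem le_sum_mul_div_sum {ι : Type*} (s : Finset ι) {g H : ι → ℝ} {c : ℝ}
    (hg : ∀ i ∈ s, 0 ≤ g i) (hpos : 0 < ∑ i ∈ s, g i) (hH : ∀ i ∈ s, c ≤ H i) :
    c ≤ (∑ i ∈ s, g i * H i) / ∑ i ∈ s, g i := by
  rw [le_div_iff₀ hpos, mul_sum]
  exact sum_le_sum fun i hi => by rw [mul_comm]; exact mul_le_mul_of_nonneg_left (hH i hi) (hg i hi)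

section Mixture

variable {ι E : Type*} [Fintype ι] [NormedAddCommGroup E] [NormedSpace ℝ E]
  {a : ι → ℝ} {U : ι → E → ℝ}

theorem fderiv_sum_mul_exp_neg_apply (hU : ∀ i, Differentiable ℝ (U i)) (x w : E) :
    fderiv ℝ (fun y => ∑ i, a i * exp (-U i y)) x w
      = -∑ i, a i * exp (-U i x) * fderiv ℝ (U i) x w := by
  have hexp : ∀ i, DifferentiableAt ℝ (fun y => exp (-U i y)) x := fun i => by fun_prop
  rw [fderiv_fun_sum fun i _ => (hexp i).const_mul (a i), _root_.sum_apply, ← sum_neg_distrib]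
  refine Finset.sum_congr rfl fun i _ => ?_
  have hneg : DifferentiableAt ℝ (fun y => -U i y) x := (hU i x).neg
  simp [fderiv_const_mul (hexp i), fderiv_exp hneg, mul_assoc]

theorem iteratedFDeriv_two_sum_mul_exp_neg_apply (hU : ∀ i, ContDiff ℝ 2 (U i)) (x w : E) :
    iteratedFDeriv ℝ 2 (fun y => ∑ i, a i * exp (-U i y)) x ![w, w]
      = ∑ i, a i * exp (-U i x)
          * (fderiv ℝ (U i) x w ^ 2 - iteratedFDeriv ℝ 2 (U i) x ![w, w]) := by
  have hexp : ∀ i, ContDiff ℝ 2 (fun y => exp (-U i y)) := fun i => (hU i).neg.exp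
  rw [iteratedFDeriv_fun_sum_apply fun i _ => (contDiff_const.mul (hexp i)).contDiffAt,
    _root_.sum_apply]
  refine Finset.sum_congr rfl fun i _ => ?_
  have hsmul : (fun y => a i * exp (-U i y)) = a i • fun y => exp (-U i y) := rfl
  have hexp2 := iteratedFDeriv_two_exp_apply (f := -U i) (hU i).neg x w
  simp only [Pi.neg_apply, iteratedFDeriv_neg_apply, fderiv_neg, neg_apply, neg_sq] at hexp2
  rw [hsmul, iteratedFDeriv_const_smul_apply (hexp i).contDiffAt, smul_apply, hexp2, smul_eq_mul]
  ring

end Mixture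

theorem mixture_log_hessian_lower_bound_general
    (d N : ℕ) (hN : 1 ≤ N)
    (a : Fin N → ℝ) (ha : ∀ i, 0 < a i)
    (U : Fin N → EuclideanSpace ℝ (Fin d) → ℝ)
    (hU : ∀ i, ContDiff ℝ 2 (U i))
    (K : ℝ)
    (hHess : ∀ i (x w : EuclideanSpace ℝ (Fin d)),
      K * ‖w‖ ^ 2 ≤ iteratedFDeriv ℝ 2 (U i) x ![w, w])
    (μ : EuclideanSpace ℝ (Fin d) → ℝ)
    (hμ : ∀ x, μ x = ∑ i, a i * Real.exp (-(U i x)))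
    (x w : EuclideanSpace ℝ (Fin d)) :
    K * ‖w‖ ^ 2 -
        ((μ x) ^ 2)⁻¹ *
          ∑ p ∈ Finset.univ.filter (fun p : Fin N × Fin N => p.2 < p.1),
            a p.1 * a p.2 * Real.exp (-(U p.1 x) - U p.2 x) *
              ⟪gradient (U p.1) x - gradient (U p.2) x, w⟫ ^ 2
      ≤ -(iteratedFDeriv ℝ 2 (fun y => Real.log (μ y)) x ![w, w]) := by
  obtain rfl : μ = fun y => ∑ i, a i * exp (-U i y) := funext hμ
  have hweight_pos : ∀ y i, 0 < a i * exp (-U i y) := fun y i => mul_pos (ha i) (exp_pos _)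
  have hμ_pos : ∀ y, 0 < ∑ i, a i * exp (-U i y) := fun y =>
    sum_pos (fun i _ => hweight_pos y i) (univ_nonempty_iff.2 ⟨⟨0, hN⟩⟩)
  have hμ_smooth : ContDiff ℝ 2 fun y => ∑ i, a i * exp (-U i y) :=
    ContDiff.sum fun i _ => contDiff_const.mul (hU i).neg.exp
  have hpairs : ∀ p : Fin N × Fin N,
      a p.1 * a p.2 * exp (-U p.1 x - U p.2 x) * ⟪gradient (U p.1) x - gradient (U p.2) x, w⟫ ^ 2
        = a p.1 * exp (-U p.1 x) * (a p.2 * exp (-U p.2 x))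
          * (fderiv ℝ (U p.1) x w - fderiv ℝ (U p.2) x w) ^ 2 := fun p => by
    rw [inner_sub_left, inner_gradient_left, inner_gradient_left, sub_eq_add_neg, exp_add]
    ring
  have hHess_avg := le_sum_mul_div_sum univ (fun i _ => (hweight_pos x i).le) (hμ_pos x)
    fun i _ => hHess i x w
  rw [iteratedFDeriv_two_log_apply hμ_smooth hμ_pos, Finset.sum_congr rfl fun p _ => hpairs p,
    ← sum_mul_sum_sub_sq_eq_sum_filter_lt (fun i => a i * exp (-U i x))
      (fun i => fderiv ℝ (U i) x w),
    fderiv_sum_mul_exp_neg_apply fun i => (hU i).differentiable two_ne_zero,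
    iteratedFDeriv_two_sum_mul_exp_neg_apply hU]
  simp only [mul_sub (a _ * exp _), sum_sub_distrib]
  set S := ∑ i, a i * exp (-U i x)
  set A := ∑ i, a i * exp (-U i x) * fderiv ℝ (U i) x w ^ 2
  set B := ∑ i, a i * exp (-U i x) * fderiv ℝ (U i) x w
  have hvariance : (S ^ 2)⁻¹ * (S * A - B ^ 2) = A / S - (B / S) ^ 2 := by
    field_simp [(hμ_pos x).ne']
  linear_combination hHess_avg - hvariance

/-- **Proposition 8, first bound.** For a mixture `μ = Σ_i α_i e^{-U_i}` of strongly log-concave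
components with `∇² U_i ≽ K I_d`, the log-Hessian satisfies
`-∇² log μ ≽ K I_d - μ⁻² Σ_{i>j} α_i α_j e^{-U_i-U_j} (∇U_i - ∇U_j)^{⊗2}`
(as quadratic forms, evaluated at any direction `w`). -/
theorem mixture_log_hessian_lower_bound
    (d N : ℕ) (hN : 1 ≤ N)
    (a : Fin N → ℝ) (ha : ∀ i, 0 < a i)
    (U : Fin N → EuclideanSpace ℝ (Fin d) → ℝ)
    (hU : ∀ i, ContDiff ℝ 2 (U i))
    (hInt : ∀ i, Integrable (fun x => Real.exp (-(U i x))))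
    (K : ℝ) (hK : 0 < K)
    (hHess : ∀ i (x w : EuclideanSpace ℝ (Fin d)),
      K * ‖w‖ ^ 2 ≤ iteratedFDeriv ℝ 2 (U i) x ![w, w])
    (μ : EuclideanSpace ℝ (Fin d) → ℝ)
    (hμ : ∀ x, μ x = ∑ i, a i * Real.exp (-(U i x)))
    (x w : EuclideanSpace ℝ (Fin d)) :
    K * ‖w‖ ^ 2 -
        ((μ x) ^ 2)⁻¹ *
          ∑ p ∈ Finset.univ.filter (fun p : Fin N × Fin N => p.2 < p.1),
            a p.1 * a p.2 * Real.exp (-(U p.1 x) - U p.2 x) *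
              ⟪gradient (U p.1) x - gradient (U p.2) x, w⟫ ^ 2
      ≤ -(iteratedFDeriv ℝ 2 (fun y => Real.log (μ y)) x ![w, w]) :=
  mixture_log_hessian_lower_bound_general d N hN a ha U hU K hHess μ hμ x w
end

section
/- Let μ be a probability measure on ℝ^d, t > 0, and z ∈ ℝ^d. Define the probability measure μ_{z,t}(dx) ∝ exp( ⟨z,x⟩/t − ‖x‖²/(2t) ) μ(dx). Then −∇² log(μ*γ_t)(z) = (1/t)·( I_d − Cov(μ_{z,t})/t ), where Cov(μ_{z,t}) is the covariance matrix of μ_{z,t}. -/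
/-!
Expanding `‖z - x‖²` in the Gaussian kernel factors `(μ * γ_t)(z)` as
`(2πt)^(-d/2) · exp(-‖z‖²/(2t)) · Z(z)`, where `Z(z) = ∫ exp(⟪z, x⟫/t - ‖x‖²/(2t)) dμ(x)` is the
normalizing constant of `μ_{z,t}`. The first two factors contribute `I_d / t` to
`-∇² log(μ * γ_t)`, and `Z` is a Laplace transform in `z / t`, so `∇² log Z` is the covariance of
`μ_{z,t}` divided by `t²`. Differentiating `Z` twice under the integral sign is legitimate
because the tilt decays like a Gaussian in `x`, locally uniformly in `z`.
-/

noncomputable section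
open Real MeasureTheory
open scoped RealInnerProductSpace

/-- The Gaussian tilt `exp(⟨z,x⟩/t - ‖x‖²/(2t))` defining the tilted measure `μ_{z,t}`. -/
def tilt {d : ℕ} (z : EuclideanSpace ℝ (Fin d)) (t : ℝ)
    (x : EuclideanSpace ℝ (Fin d)) : ℝ :=
  Real.exp (⟪z, x⟫ / t - ‖x‖ ^ 2 / (2 * t))

section TiltBounds

variable {d : ℕ} {t : ℝ}

lemma tilt_pos (y : EuclideanSpace ℝ (Fin d)) (t : ℝ) (x : EuclideanSpace ℝ (Fin d)) :
    0 < tilt y t x :=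
  exp_pos _

@[fun_prop]
lemma continuous_tilt (y : EuclideanSpace ℝ (Fin d)) (t : ℝ) : Continuous (tilt y t) := by
  unfold tilt
  fun_prop

lemma hasFDerivAt_tilt (x y : EuclideanSpace ℝ (Fin d)) :
    HasFDerivAt (fun y => tilt y t x) (tilt y t x • (t⁻¹ • innerSL ℝ x)) y := by
  have hexponent :
      HasFDerivAt (fun y => ⟪y, x⟫ / t - ‖x‖ ^ 2 / (2 * t)) (t⁻¹ • innerSL ℝ x) y := by
    refine ((((innerSL ℝ x).hasFDerivAt (x := y)).const_smul t⁻¹).sub_const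
      (‖x‖ ^ 2 / (2 * t))).congr_of_eventuallyEq (.of_forall fun y => ?_)
    simp [real_inner_comm, div_eq_inv_mul]
  exact hexponent.exp

lemma one_add_norm_sq_mul_tilt_le (ht : 0 < t) {R : ℝ} {y : EuclideanSpace ℝ (Fin d)}
    (hy : ‖y‖ ≤ R) (x : EuclideanSpace ℝ (Fin d)) :
    (1 + ‖x‖) ^ 2 * tilt y t x ≤ 2 * ((1 + 4 * t) * exp (R ^ 2 / t)) := by
  set u := ‖x‖ ^ 2 / (4 * t) with hu_def
  have hu : 0 ≤ u := by positivity
  have hsq : ‖x‖ ^ 2 = 4 * t * u := by rw [hu_def]; field_simp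
  -- `⟪y, x⟫ ≤ R ‖x‖ ≤ R² + ‖x‖² / 4`: half of the Gaussian factor absorbs the linear term
  have hexponent : ⟪y, x⟫ / t - ‖x‖ ^ 2 / (2 * t) ≤ R ^ 2 / t + -u := by
    have hinner : ⟪y, x⟫ ≤ R ^ 2 + ‖x‖ ^ 2 / 4 := by
      nlinarith [real_inner_le_norm y x, norm_nonneg x, sq_nonneg (R - ‖x‖ / 2),
        mul_le_mul_of_nonneg_right hy (norm_nonneg x)]
    calc ⟪y, x⟫ / t - ‖x‖ ^ 2 / (2 * t) = (⟪y, x⟫ - ‖x‖ ^ 2 / 2) / t := by ring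
      _ ≤ (R ^ 2 - ‖x‖ ^ 2 / 4) / t := div_le_div_of_nonneg_right (by linarith) ht.le
      _ = R ^ 2 / t + -u := by rw [hu_def]; ring
  have htilt : tilt y t x ≤ exp (R ^ 2 / t) * exp (-u) := by
    rw [← exp_add]
    exact exp_le_exp.mpr hexponent
  have hdecay : exp (-u) ≤ 1 := exp_le_one_iff.mpr (by linarith)
  have hmul_decay : u * exp (-u) ≤ 1 := by
    rw [exp_neg, ← div_eq_mul_inv, div_le_one (exp_pos u)]
    linarith [add_one_le_exp u]
  calc (1 + ‖x‖) ^ 2 * tilt y t x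
      ≤ 2 * (1 + ‖x‖ ^ 2) * tilt y t x := by
        gcongr ?_ * _
        · exact (tilt_pos y t x).le
        · nlinarith [sq_nonneg (‖x‖ - 1)]
    _ ≤ 2 * ((1 + 4 * t * u) * (exp (R ^ 2 / t) * exp (-u))) := by
        rw [hsq, mul_assoc]; gcongr
    _ = 2 * ((exp (-u) + 4 * t * (u * exp (-u))) * exp (R ^ 2 / t)) := by ring
    _ ≤ 2 * ((1 + 4 * t) * exp (R ^ 2 / t)) := by
        have hsum : exp (-u) + 4 * t * (u * exp (-u)) ≤ 1 + 4 * t := by nlinarith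
        gcongr

end TiltBounds

section TiltIntegrals

variable {d : ℕ} {t : ℝ} {μ : Measure (EuclideanSpace ℝ (Fin d))} [IsFiniteMeasure μ]
  {F : Type*} [NormedAddCommGroup F] [NormedSpace ℝ F]

lemma integrable_tilt_smul (ht : 0 < t) (y : EuclideanSpace ℝ (Fin d))
    {g : EuclideanSpace ℝ (Fin d) → F} (hg : Continuous g) {C : ℝ}
    (hgC : ∀ x, ‖g x‖ ≤ C * (1 + ‖x‖) ^ 2) :
    Integrable (fun x => tilt y t x • g x) μ := by
  have hC : 0 ≤ C := by simpa using (norm_nonneg _).trans (hgC 0)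
  refine .of_bound ((continuous_tilt y t).smul hg).aestronglyMeasurable
    (C * (2 * ((1 + 4 * t) * exp (‖y‖ ^ 2 / t)))) (.of_forall fun x => ?_)
  calc ‖tilt y t x • g x‖ = tilt y t x * ‖g x‖ := by
        rw [norm_smul, Real.norm_of_nonneg (tilt_pos y t x).le]
    _ ≤ tilt y t x * (C * (1 + ‖x‖) ^ 2) := mul_le_mul_of_nonneg_left (hgC x) (tilt_pos y t x).le
    _ = C * ((1 + ‖x‖) ^ 2 * tilt y t x) := by ring
    _ ≤ C * (2 * ((1 + 4 * t) * exp (‖y‖ ^ 2 / t))) :=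
        mul_le_mul_of_nonneg_left (one_add_norm_sq_mul_tilt_le ht le_rfl x) hC

lemma norm_tilt_smul_smulRight_le (ht : 0 < t) {R : ℝ} {y : EuclideanSpace ℝ (Fin d)}
    (hy : ‖y‖ ≤ R) {g : EuclideanSpace ℝ (Fin d) → F} {C : ℝ}
    (hgC : ∀ x, ‖g x‖ ≤ C * (1 + ‖x‖)) (x : EuclideanSpace ℝ (Fin d)) :
    ‖tilt y t x • (t⁻¹ • innerSL ℝ x).smulRight (g x)‖
      ≤ C / t * (2 * ((1 + 4 * t) * exp (R ^ 2 / t))) := by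
  have hxg : ‖x‖ * ‖g x‖ ≤ C * (1 + ‖x‖) ^ 2 := by
    nlinarith [mul_le_mul_of_nonneg_left (hgC x) (by positivity : (0 : ℝ) ≤ 1 + ‖x‖),
      norm_nonneg (g x)]
  calc ‖tilt y t x • (t⁻¹ • innerSL ℝ x).smulRight (g x)‖
      = t⁻¹ * (‖x‖ * ‖g x‖) * tilt y t x := by
        rw [norm_smul, ContinuousLinearMap.norm_smulRight_apply, norm_smul, innerSL_apply_norm,
          Real.norm_of_nonneg (tilt_pos y t x).le, Real.norm_of_nonneg (inv_pos.mpr ht).le]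
        ring
    _ ≤ t⁻¹ * (C * (1 + ‖x‖) ^ 2) * tilt y t x := by gcongr; exact (tilt_pos y t x).le
    _ = C / t * ((1 + ‖x‖) ^ 2 * tilt y t x) := by ring
    _ ≤ C / t * (2 * ((1 + 4 * t) * exp (R ^ 2 / t))) := by
        have hC : 0 ≤ C := by simpa using (norm_nonneg _).trans (hgC 0)
        exact mul_le_mul_of_nonneg_left (one_add_norm_sq_mul_tilt_le ht hy x) (by positivity)

lemma hasFDerivAt_integral_tilt_smul (ht : 0 < t) (z : EuclideanSpace ℝ (Fin d))
    {g : EuclideanSpace ℝ (Fin d) → F} (hg : Continuous g) {C : ℝ}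
    (hgC : ∀ x, ‖g x‖ ≤ C * (1 + ‖x‖)) :
    HasFDerivAt (fun y => ∫ x, tilt y t x • g x ∂μ)
      (∫ x, tilt z t x • (t⁻¹ • innerSL ℝ x).smulRight (g x) ∂μ) z := by
  have hgC' : ∀ x, ‖g x‖ ≤ C * (1 + ‖x‖) ^ 2 := fun x => by
    have hC : 0 ≤ C := by simpa using (norm_nonneg _).trans (hgC 0)
    exact (hgC x).trans <| mul_le_mul_of_nonneg_left
      (le_self_pow₀ (by linarith [norm_nonneg x]) two_ne_zero) hC
  have hball : ∀ y ∈ Metric.ball z 1, ‖y‖ ≤ ‖z‖ + 1 := fun y hy => by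
    linarith [norm_le_norm_add_norm_sub' y z, mem_ball_iff_norm.mp hy]
  refine hasFDerivAt_integral_of_dominated_of_fderiv_le (Metric.ball_mem_nhds z one_pos)
    (.of_forall fun y => ((continuous_tilt y t).smul hg).aestronglyMeasurable)
    (integrable_tilt_smul ht z hg hgC') ?_
    (ae_of_all _ fun x y hy => norm_tilt_smul_smulRight_le ht (hball y hy) hgC x)
    (integrable_const _) (ae_of_all _ fun x y _ => ?_)
  · -- supplied by hand: the default instance search explores `E →L[ℝ] F` and times out
    have := secondCountableTopologyEither_of_left (EuclideanSpace ℝ (Fin d))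
      (EuclideanSpace ℝ (Fin d) →L[ℝ] F)
    exact ((continuous_tilt z t).smul (by fun_prop)).aestronglyMeasurable
  · refine ((hasFDerivAt_tilt x y).smul_const (g x)).congr_fderiv ?_
    ext v
    simp [smul_smul, mul_assoc]

end TiltIntegrals

theorem hasFDerivAt_fderiv_log {E : Type*} [NormedAddCommGroup E] [NormedSpace ℝ E]
    {M : E → ℝ} {M' : E → StrongDual ℝ E} {M'' : E →L[ℝ] StrongDual ℝ E} {z : E}
    (hM : ∀ y, HasFDerivAt M (M' y) y) (hM_pos : ∀ y, 0 < M y) (hM' : HasFDerivAt M' M'' z) :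
    HasFDerivAt (fderiv ℝ fun y => log (M y))
      ((M z)⁻¹ • M'' + (-(M z ^ 2)⁻¹ • M' z).smulRight (M' z)) z := by
  have hfderiv : (fderiv ℝ fun y => log (M y)) = fun y => (M y)⁻¹ • M' y :=
    funext fun y => ((hM y).log (hM_pos y).ne').fderiv
  rw [hfderiv]
  exact ((hasDerivAt_inv (hM_pos z).ne').comp_hasFDerivAt z (hM z)).smul hM'

section TiltMass

variable {d : ℕ} {t : ℝ} (μ : Measure (EuclideanSpace ℝ (Fin d))) (t)

/-- The normalizing constant of the tilted measure `μ_{y,t}`. -/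
def tiltMass (y : EuclideanSpace ℝ (Fin d)) : ℝ :=
  ∫ x, tilt y t x ∂μ

def tiltMassDeriv (y : EuclideanSpace ℝ (Fin d)) : StrongDual ℝ (EuclideanSpace ℝ (Fin d)) :=
  ∫ x, tilt y t x • (t⁻¹ • innerSL ℝ x) ∂μ

def tiltMassHessian (y : EuclideanSpace ℝ (Fin d)) :
    EuclideanSpace ℝ (Fin d) →L[ℝ] StrongDual ℝ (EuclideanSpace ℝ (Fin d)) :=
  ∫ x, tilt y t x • (t⁻¹ • innerSL ℝ x).smulRight (t⁻¹ • innerSL ℝ x) ∂μ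

variable {μ t} [IsFiniteMeasure μ]

lemma norm_inv_smul_innerSL_le (ht : 0 < t) (x : EuclideanSpace ℝ (Fin d)) :
    ‖t⁻¹ • innerSL ℝ x‖ ≤ t⁻¹ * (1 + ‖x‖) := by
  rw [norm_smul, innerSL_apply_norm, Real.norm_of_nonneg (inv_pos.mpr ht).le]
  gcongr
  linarith

lemma integrable_tilt (ht : 0 < t) (y : EuclideanSpace ℝ (Fin d)) : Integrable (tilt y t) μ := by
  simpa using integrable_tilt_smul (μ := μ) ht y (g := fun _ => (1 : ℝ)) continuous_const
    (C := 1) (fun x => by rw [norm_one, one_mul]; exact one_le_pow₀ (by linarith [norm_nonneg x]))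

lemma tiltMass_pos [NeZero μ] (ht : 0 < t) (y : EuclideanSpace ℝ (Fin d)) :
    0 < tiltMass μ t y :=
  integral_exp_pos (f := fun x => ⟪y, x⟫ / t - ‖x‖ ^ 2 / (2 * t)) (integrable_tilt ht y)

lemma hasFDerivAt_tiltMass (ht : 0 < t) (y : EuclideanSpace ℝ (Fin d)) :
    HasFDerivAt (tiltMass μ t) (tiltMassDeriv μ t y) y := by
  have h := hasFDerivAt_integral_tilt_smul (μ := μ) ht y (g := fun _ => (1 : ℝ))
    continuous_const (C := 1) (fun x => by simp)
  simp only [smul_eq_mul, mul_one] at h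
  refine h.congr_fderiv ?_
  unfold tiltMassDeriv
  congr 1 with x v
  simp

lemma hasFDerivAt_tiltMassDeriv (ht : 0 < t) (z : EuclideanSpace ℝ (Fin d)) :
    HasFDerivAt (tiltMassDeriv μ t) (tiltMassHessian μ t z) z :=
  hasFDerivAt_integral_tilt_smul ht z (by fun_prop) (norm_inv_smul_innerSL_le ht)

lemma tiltMassDeriv_apply (ht : 0 < t) (y w : EuclideanSpace ℝ (Fin d)) :
    tiltMassDeriv μ t y w = t⁻¹ * ∫ x, tilt y t x * ⟪w, x⟫ ∂μ := by
  have hgrowth (x : EuclideanSpace ℝ (Fin d)) : ‖t⁻¹ • innerSL ℝ x‖ ≤ t⁻¹ * (1 + ‖x‖) ^ 2 :=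
    (norm_inv_smul_innerSL_le ht x).trans <| mul_le_mul_of_nonneg_left
      (le_self_pow₀ (by linarith [norm_nonneg x]) two_ne_zero) (inv_nonneg.2 ht.le)
  rw [tiltMassDeriv, ContinuousLinearMap.integral_apply
    (integrable_tilt_smul ht y (by fun_prop) hgrowth), ← integral_const_mul]
  simp [real_inner_comm, mul_left_comm]

lemma tiltMassHessian_apply_apply (ht : 0 < t) (y w : EuclideanSpace ℝ (Fin d)) :
    tiltMassHessian μ t y w w = t⁻¹ ^ 2 * ∫ x, tilt y t x * ⟪w, x⟫ ^ 2 ∂μ := by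
  have hgrowth (x : EuclideanSpace ℝ (Fin d)) :
      ‖(t⁻¹ • innerSL ℝ x).smulRight (t⁻¹ • innerSL ℝ x)‖ ≤ t⁻¹ ^ 2 * (1 + ‖x‖) ^ 2 := by
    rw [ContinuousLinearMap.norm_smulRight_apply, ← sq, ← mul_pow]
    gcongr
    exact norm_inv_smul_innerSL_le ht x
  have hint := integrable_tilt_smul (μ := μ) ht y
    (g := fun x => (t⁻¹ • innerSL ℝ x).smulRight (t⁻¹ • innerSL ℝ x)) (by fun_prop) hgrowth
  rw [tiltMassHessian, ContinuousLinearMap.integral_apply hint,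
    ContinuousLinearMap.integral_apply (hint.apply_continuousLinearMap w), ← integral_const_mul]
  congr 1 with x
  simp only [smul_apply, ContinuousLinearMap.smulRight_apply, coe_innerSL_apply, real_inner_comm,
    smul_eq_mul, inv_pow]
  ring

end TiltMass

section HeatFlow

/-- `innerSL ℝ` as an `ℝ`-bilinear map: over `ℝ` its conjugate-linearity is linearity. -/
def realInnerSL {E : Type*} [NormedAddCommGroup E] [InnerProductSpace ℝ E] :
    E →L[ℝ] StrongDual ℝ E :=
  innerSL ℝ

@[simp]
lemma realInnerSL_apply_apply {E : Type*} [NormedAddCommGroup E] [InnerProductSpace ℝ E]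
    (v w : E) : realInnerSL v w = ⟪v, w⟫ :=
  rfl

variable {d : ℕ} {t : ℝ} {μ : Measure (EuclideanSpace ℝ (Fin d))}

lemma heatConvMeas_eq_mul_tiltMass (y : EuclideanSpace ℝ (Fin d)) :
    heatConvMeas μ t y
      = (2 * π * t) ^ (-(d : ℝ) / 2) * exp (-‖y‖ ^ 2 / (2 * t)) * tiltMass μ t y := by
  have hkernel (x : EuclideanSpace ℝ (Fin d)) : gaussDensity t (y - x)
      = (2 * π * t) ^ (-(d : ℝ) / 2) * exp (-‖y‖ ^ 2 / (2 * t)) * tilt y t x := by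
    rw [gaussDensity, tilt, norm_sub_sq_real, mul_assoc _ (exp _), ← exp_add]
    ring_nf
  simp_rw [heatConvMeas, tiltMass, hkernel, integral_const_mul]

lemma hasFDerivAt_fderiv_log_heatConvMeas [IsFiniteMeasure μ] [NeZero μ] (ht : 0 < t)
    (z : EuclideanSpace ℝ (Fin d)) :
    HasFDerivAt (fderiv ℝ fun y => log (heatConvMeas μ t y))
      (-t⁻¹ • realInnerSL + ((tiltMass μ t z)⁻¹ • tiltMassHessian μ t z
        + (-(tiltMass μ t z ^ 2)⁻¹ • tiltMassDeriv μ t z).smulRight (tiltMassDeriv μ t z))) z := by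
  have hlog : (fun y => log (heatConvMeas μ t y))
      = fun y =>
        log ((2 * π * t) ^ (-(d : ℝ) / 2)) - t⁻¹ / 2 * ‖y‖ ^ 2 + log (tiltMass μ t y) := by
    funext y
    rw [heatConvMeas_eq_mul_tiltMass, log_mul (by positivity) (tiltMass_pos ht y).ne',
      log_mul (by positivity) (exp_pos _).ne', log_exp]
    ring
  have hlogMass (y) : HasFDerivAt (fun y => log (tiltMass μ t y))
      ((tiltMass μ t y)⁻¹ • tiltMassDeriv μ t y) y :=
    (hasFDerivAt_tiltMass ht y).log (tiltMass_pos ht y).ne'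
  have hfderiv : (fderiv ℝ fun y => log (heatConvMeas μ t y))
      = fun y => -t⁻¹ • realInnerSL y + fderiv ℝ (fun y => log (tiltMass μ t y)) y := by
    rw [hlog]
    funext y
    refine (((hasFDerivAt_const _ y).sub ((hasStrictFDerivAt_norm_sq y).hasFDerivAt.const_mul
      (t⁻¹ / 2))).add (hlogMass y)).fderiv.trans ?_
    rw [(hlogMass y).fderiv]
    ext v
    simp only [zero_sub, add_apply, neg_apply, smul_apply, coe_innerSL_apply, nsmul_eq_mul,
      Nat.cast_ofNat, smul_eq_mul, realInnerSL_apply_apply]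
    ring
  rw [hfderiv]
  exact (realInnerSL.hasFDerivAt.const_smul (-t⁻¹)).add
    (hasFDerivAt_fderiv_log (hasFDerivAt_tiltMass ht) (tiltMass_pos (μ := μ) ht)
      (hasFDerivAt_tiltMassDeriv ht z))

end HeatFlow

/-- **Probabilistic representation of the log-Hessian (equation (7)).** For a probability
measure `μ`, `t > 0` and `z`, one has
`-∇² log(μ*γ_t)(z) = (1/t)(I_d - Cov(μ_{z,t})/t)` where `μ_{z,t} ∝ tilt(z,t) μ`;
stated here as an identity of quadratic forms: for every `w`, the quadratic form of the
left-hand side at `w` equals `(1/t)(‖w‖² - ⟨w, Cov(μ_{z,t}) w⟩/t)`, the moments of `μ_{z,t}`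
being written as tilted integrals normalized by `c = ∫ tilt(z,t) dμ`. -/
theorem log_hessian_probabilistic_representation
    (d : ℕ) (μ : Measure (EuclideanSpace ℝ (Fin d))) [IsProbabilityMeasure μ]
    (t : ℝ) (ht : 0 < t) (z w : EuclideanSpace ℝ (Fin d)) :
    -(iteratedFDeriv ℝ 2 (fun y => Real.log (heatConvMeas μ t y)) z ![w, w])
      = 1 / t * (‖w‖ ^ 2 -
          ((∫ x, tilt z t x * ⟪w, x⟫ ^ 2 ∂μ) / (∫ x, tilt z t x ∂μ)
            - ((∫ x, tilt z t x * ⟪w, x⟫ ∂μ) / (∫ x, tilt z t x ∂μ)) ^ 2) / t) := by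
  rw [iteratedFDeriv_two_apply, (hasFDerivAt_fderiv_log_heatConvMeas ht z).fderiv]
  have hmass := (tiltMass_pos (μ := μ) ht z).ne'
  simp only [Matrix.cons_val_zero, Matrix.cons_val_one, add_apply, smul_apply,
    ContinuousLinearMap.smulRight_apply, realInnerSL_apply_apply, real_inner_self_eq_norm_sq,
    smul_eq_mul, tiltMassDeriv_apply ht, tiltMassHessian_apply_apply ht]
  unfold tiltMass at hmass ⊢
  field_simp
  ring
end
end

section
/- Let μ be a probability measure on ℝ^d supported in the closed Euclidean ball B(0,R) for some R > 0. Then for every t > 0 and every z ∈ ℝ^d, (1/t)·(1 − R²/t)·I_d ≼ −∇² log(μ*γ_t)(z) ≼ (1/t)·I_d. In particular, μ*γ_t is log-concave for t ≥ R². -/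
/-! Along a line `s ↦ z + s • w`, completing the square in the Gaussian writes `log (μ * γ_t)` as
the quadratic `-(s ⟪z, w⟫ + s² ‖w‖² / 2) / t` plus the cumulant generating function of
`x ↦ ⟪x, w⟫ / t` under the reweighted measure `γ_t (z - x) μ(dx)`. The second derivative of a
cumulant generating function is the variance of the exponentially tilted law; since `μ` lives in
`B(0, R)`, the variable ranges in `[-R‖w‖/t, R‖w‖/t]`, so by Popoviciu's inequality that variance
lies in `[0, R²‖w‖²/t²]`. Hence `-∇² log (μ * γ_t) (z) [w, w] = ‖w‖²/t - variance` satisfies both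
bounds, and for `t ≥ R²` the Hessian of `-log (μ * γ_t)` is positive semidefinite, which gives
convexity. Differentiating under the integral is legitimate because `μ` has compact support. -/

noncomputable section
open Real MeasureTheory

open Set Filter ProbabilityTheory

section CompactSupport

variable {E F : Type*} [NormedAddCommGroup E] [NormedSpace ℝ E] [FiniteDimensional ℝ E]
  [MeasurableSpace E] [NormedAddCommGroup F] {μ : Measure E} {K : Set E}

theorem exists_bound_comp_sub_of_ae_mem {g : E → F}
    (hg : Continuous g) (hK : IsCompact K) (hμK : ∀ᵐ x ∂μ, x ∈ K) (z₀ : E) :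
    ∃ C, ∀ᵐ x ∂μ, ∀ z ∈ Metric.ball z₀ 1, ‖g (z - x)‖ ≤ C := by
  obtain ⟨C, hC⟩ := (((isCompact_closedBall z₀ 1).prod hK).image
    continuous_sub).exists_bound_of_continuousOn hg.continuousOn
  exact ⟨C, hμK.mono fun x hx z hz =>
    hC _ ⟨(z, x), ⟨Metric.ball_subset_closedBall hz, hx⟩, rfl⟩⟩

variable [BorelSpace E] [IsFiniteMeasure μ]

theorem integrable_comp_sub_of_ae_mem {g : E → F} (hg : Continuous g) (hK : IsCompact K)
    (hμK : ∀ᵐ x ∂μ, x ∈ K) (z : E) : Integrable (fun x => g (z - x)) μ := by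
  obtain ⟨C, hC⟩ := exists_bound_comp_sub_of_ae_mem hg hK hμK z
  exact (integrable_const C).mono' (hg.comp (continuous_sub_left z)).aestronglyMeasurable
    (hC.mono fun x hx => hx z (Metric.mem_ball_self one_pos))

theorem continuous_integral_comp_sub_of_ae_mem [NormedSpace ℝ F] {g : E → F}
    (hg : Continuous g) (hK : IsCompact K) (hμK : ∀ᵐ x ∂μ, x ∈ K) :
    Continuous fun z => ∫ x, g (z - x) ∂μ := by
  refine continuous_iff_continuousAt.2 fun z₀ => ?_
  obtain ⟨C, hC⟩ := exists_bound_comp_sub_of_ae_mem hg hK hμK z₀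
  refine continuousAt_of_dominated
    (Eventually.of_forall fun z => (hg.comp (continuous_sub_left z)).aestronglyMeasurable)
    ?_ (integrable_const C)
    (Eventually.of_forall fun x => (hg.comp (continuous_sub_right x)).continuousAt)
  filter_upwards [Metric.ball_mem_nhds z₀ one_pos] with z hz
  exact hC.mono fun x hx => hx z hz

theorem hasFDerivAt_integral_comp_sub_of_ae_mem [NormedSpace ℝ F] [CompleteSpace F] {g : E → F}
    (hg : ContDiff ℝ 1 g) (hK : IsCompact K) (hμK : ∀ᵐ x ∂μ, x ∈ K) (z₀ : E) :
    HasFDerivAt (fun z => ∫ x, g (z - x) ∂μ) (∫ x, fderiv ℝ g (z₀ - x) ∂μ) z₀ := by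
  have hg' : Continuous (fderiv ℝ g) := hg.continuous_fderiv one_ne_zero
  obtain ⟨C, hC⟩ := exists_bound_comp_sub_of_ae_mem hg' hK hμK z₀
  refine hasFDerivAt_integral_of_dominated_of_fderiv_le (Metric.ball_mem_nhds z₀ one_pos)
    (Eventually.of_forall fun z =>
      (hg.continuous.comp (continuous_sub_left z)).aestronglyMeasurable)
    (integrable_comp_sub_of_ae_mem hg.continuous hK hμK z₀)
    (hg'.comp (continuous_sub_left z₀)).aestronglyMeasurable hC (integrable_const C)
    (Eventually.of_forall fun x z _ => ?_)
  exact ((hg.differentiable one_ne_zero) (z - x)).hasFDerivAt.comp z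
    ((hasFDerivAt_id z).sub_const x)

theorem contDiff_integral_comp_sub_of_ae_mem [NormedSpace ℝ F] [CompleteSpace F] {n : ℕ}
    {g : E → F} (hg : ContDiff ℝ n g) (hK : IsCompact K) (hμK : ∀ᵐ x ∂μ, x ∈ K) :
    ContDiff ℝ n fun z => ∫ x, g (z - x) ∂μ := by
  induction n generalizing F with
  | zero => exact contDiff_zero.2 (continuous_integral_comp_sub_of_ae_mem hg.continuous hK hμK)
  | succ n ih =>
    have hg₁ : ContDiff ℝ 1 g := hg.of_le (by exact_mod_cast Nat.le_add_left 1 n)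
    have hderiv := hasFDerivAt_integral_comp_sub_of_ae_mem hg₁ hK hμK
    -- Directional derivatives keep the codomain `F`, so the induction hypothesis applies to them.
    rw [Nat.cast_succ, contDiff_succ_iff_fderiv_apply] at hg ⊢
    refine ⟨fun z => (hderiv z).differentiableAt, by simp, fun y => ?_⟩
    have hint := integrable_comp_sub_of_ae_mem (hg₁.continuous_fderiv one_ne_zero) hK hμK
    simp_rw [(hderiv _).fderiv, ContinuousLinearMap.integral_apply (hint _)]
    exact ih (hg.2.2 y)

end CompactSupport

theorem iteratedDeriv_two_mul_add_mul_sq (b c s : ℝ) :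
    iteratedDeriv 2 (fun s : ℝ => b * s + c * s ^ 2) s = 2 * c := by
  have hderiv : deriv (fun s : ℝ => b * s + c * s ^ 2) = fun s => b + 2 * c * s := by
    funext s
    rw [deriv_fun_add (by fun_prop) (by fun_prop)]
    simp [mul_comm, mul_left_comm]
  rw [iteratedDeriv_succ, iteratedDeriv_one, hderiv]
  simp

section LineRestriction

variable {E : Type*} [NormedAddCommGroup E] [NormedSpace ℝ E]

theorem iteratedDeriv_two_comp_line {F : Type*} [NormedAddCommGroup F] [NormedSpace ℝ F]
    {f : E → F} (hf : ContDiff ℝ 2 f) (z w : E) (s : ℝ) :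
    iteratedDeriv 2 (fun s : ℝ => f (z + s • w)) s = iteratedFDeriv ℝ 2 f (z + s • w) ![w, w] := by
  have hline : ContDiff ℝ 2 fun s : ℝ => z + s • w := by fun_prop
  have h := iteratedDeriv_vcomp_two (x := s) hf.contDiffAt hline.contDiffAt
  have hd : deriv (fun s : ℝ => z + s • w) = fun _ => w := by
    funext s
    simpa using (((hasDerivAt_id s).smul_const w).const_add z).deriv
  simp only [iteratedDeriv_succ, iteratedDeriv_zero, hd, deriv_const, map_zero, add_zero] at h
  have hw : (![w, w] : Fin 2 → E) = fun _ => w := by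
    funext i
    fin_cases i <;> rfl
  rw [iteratedDeriv_succ, iteratedDeriv_one, hw]
  exact h

theorem convexOn_univ_of_iteratedFDeriv_two_nonneg {f : E → ℝ} (hf : ContDiff ℝ 2 f)
    (hf₂ : ∀ x w, 0 ≤ iteratedFDeriv ℝ 2 f x ![w, w]) : ConvexOn ℝ univ f := by
  refine ⟨convex_univ, fun x _ y _ a b ha hb hab => ?_⟩
  have hφ : ContDiff ℝ 2 fun s : ℝ => f (x + s • (y - x)) := hf.comp (by fun_prop)
  have hφ' : Differentiable ℝ (deriv fun s : ℝ => f (x + s • (y - x))) := by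
    simpa using hφ.differentiable_iteratedDeriv 1 (by norm_num)
  have hconv := convexOn_univ_of_deriv2_nonneg (hφ.differentiable two_ne_zero) hφ' fun s => by
    rw [← iteratedDeriv_eq_iterate, iteratedDeriv_two_comp_line hf]
    exact hf₂ _ _
  have := hconv.2 (mem_univ 0) (mem_univ 1) ha hb hab
  have hb' : a = 1 - b := by linarith
  simp only [smul_eq_mul, mul_zero, mul_one, zero_add, zero_smul, add_zero, one_smul,
    add_sub_cancel] at this
  rw [smul_eq_mul, smul_eq_mul]
  convert this using 2
  rw [hb', sub_smul, one_smul, smul_sub]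
  abel

end LineRestriction

namespace ProbabilityTheory

variable {Ω : Type*} [MeasurableSpace Ω] {ν : Measure Ω} [IsFiniteMeasure ν] {X : Ω → ℝ} {a b : ℝ}

theorem integrableExpSet_eq_univ_of_mem_Icc (hX : AEMeasurable X ν)
    (hXab : ∀ᵐ ω ∂ν, X ω ∈ Icc a b) : integrableExpSet X ν = univ :=
  eq_univ_of_forall fun _ => integrable_exp_mul_of_mem_Icc hX hXab

theorem iteratedDeriv_two_cgf_mem_Icc (hX : AEMeasurable X ν)
    (hXab : ∀ᵐ ω ∂ν, X ω ∈ Icc a b) (s : ℝ) :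
    iteratedDeriv 2 (cgf X ν) s ∈ Icc 0 (((b - a) / 2) ^ 2) := by
  rcases eq_zero_or_neZero ν with rfl | _
  · simpa using sq_nonneg _
  have hint (u : ℝ) : Integrable (fun ω => exp (u * X ω)) ν :=
    integrable_exp_mul_of_mem_Icc hX hXab
  have hs : s ∈ interior (integrableExpSet X ν) := by
    simp [integrableExpSet_eq_univ_of_mem_Icc hX hXab]
  have := isProbabilityMeasure_tilted (hint s)
  rw [← variance_tilted_mul hs]
  exact ⟨variance_nonneg _ _, variance_le_sq_of_bounded (tilted_absolutelyContinuous _ _ hXab)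
    (hX.mono_ac (tilted_absolutelyContinuous _ _))⟩

end ProbabilityTheory

section Gaussian

variable {d : ℕ} {t : ℝ}

local notation "𝔼" => EuclideanSpace ℝ (Fin d)

theorem contDiff_gaussDensity {n : WithTop ℕ∞} : ContDiff ℝ n (gaussDensity (d := d) t) := by
  unfold gaussDensity
  exact contDiff_const.mul ((contDiff_norm_sq ℝ).neg.div_const _).exp

theorem continuous_gaussDensity : Continuous (gaussDensity (d := d) t) :=
  (contDiff_gaussDensity (n := 0)).continuous

theorem gaussDensity_pos (ht : 0 < t) (x : 𝔼) : 0 < gaussDensity t x := by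
  unfold gaussDensity
  positivity

theorem gaussDensity_sub_add_smul (ht : t ≠ 0) (z x w : 𝔼) (s : ℝ) :
    gaussDensity t (z + s • w - x) = exp (-(s * inner ℝ z w + s ^ 2 * ‖w‖ ^ 2 / 2) / t)
      * (gaussDensity t (z - x) * exp (s * (inner ℝ x w / t))) := by
  unfold gaussDensity
  rw [show z + s • w - x = (z - x) + s • w by abel, norm_add_sq_real, norm_smul,
    real_inner_smul_right, inner_sub_left, mul_pow, Real.norm_eq_abs, sq_abs, mul_assoc _ (exp _),
    ← exp_add, mul_left_comm (exp _), ← exp_add]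
  congr 2
  field_simp
  ring

end Gaussian

section HeatFlow

variable {d : ℕ} {R t : ℝ} {μ : Measure (EuclideanSpace ℝ (Fin d))}

local notation "𝔼" => EuclideanSpace ℝ (Fin d)

-- Up to normalisation, the law of `x ~ μ` given `x + √t • G = z`, for `G` standard Gaussian.
def gaussWeighted (μ : Measure 𝔼) (t : ℝ) (z : 𝔼) : Measure 𝔼 :=
  μ.withDensity fun x => ENNReal.ofReal (gaussDensity t (z - x))

theorem heatConvMeas_add_smul (ht : 0 < t) (z w : 𝔼) (s : ℝ) :
    heatConvMeas μ t (z + s • w) = exp (-(s * inner ℝ z w + s ^ 2 * ‖w‖ ^ 2 / 2) / t)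
      * mgf (fun x => inner ℝ x w / t) (gaussWeighted μ t z) s := by
  have hρ : Measurable fun x => ENNReal.ofReal (gaussDensity t (z - x)) :=
    (continuous_gaussDensity.comp (continuous_sub_left z)).measurable.ennreal_ofReal
  rw [mgf, gaussWeighted, integral_withDensity_eq_integral_toReal_smul hρ
    (ae_of_all _ fun _ => ENNReal.ofReal_lt_top), ← integral_const_mul]
  refine integral_congr_ae (ae_of_all _ fun x => ?_)
  dsimp only
  rw [ENNReal.toReal_ofReal (gaussDensity_pos ht _).le, smul_eq_mul,
    gaussDensity_sub_add_smul ht.ne']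

theorem ae_inner_div_mem_Icc (hμ : ∀ᵐ x ∂μ, x ∈ Metric.closedBall 0 R) (ht : 0 < t) (z w : 𝔼) :
    ∀ᵐ x ∂gaussWeighted μ t z, inner ℝ x w / t ∈ Icc (-(R * ‖w‖ / t)) (R * ‖w‖ / t) := by
  refine withDensity_absolutelyContinuous _ _ (hμ.mono fun x hx => abs_le.1 ?_)
  rw [abs_div, abs_of_pos ht]
  gcongr
  exact (abs_real_inner_le_norm x w).trans
    (mul_le_mul_of_nonneg_right (mem_closedBall_zero_iff.1 hx) (norm_nonneg w))

variable [IsFiniteMeasure μ]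

theorem contDiff_heatConvMeas (hμ : ∀ᵐ x ∂μ, x ∈ Metric.closedBall 0 R) {n : ℕ} :
    ContDiff ℝ n (heatConvMeas μ t) :=
  contDiff_integral_comp_sub_of_ae_mem contDiff_gaussDensity (isCompact_closedBall 0 R) hμ

theorem heatConvMeas_pos [NeZero μ] (ht : 0 < t) (hμ : ∀ᵐ x ∂μ, x ∈ Metric.closedBall 0 R)
    (z : 𝔼) : 0 < heatConvMeas μ t z := by
  rw [heatConvMeas, integral_pos_iff_support_of_nonneg (fun x => (gaussDensity_pos ht _).le)
    (integrable_comp_sub_of_ae_mem continuous_gaussDensity (isCompact_closedBall 0 R)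
      hμ z)]
  simp [Function.support, (gaussDensity_pos ht _).ne', NeZero.ne μ]

theorem isFiniteMeasure_gaussWeighted (hμ : ∀ᵐ x ∂μ, x ∈ Metric.closedBall 0 R) (z : 𝔼) :
    IsFiniteMeasure (gaussWeighted μ t z) :=
  isFiniteMeasure_withDensity_ofReal (integrable_comp_sub_of_ae_mem
    continuous_gaussDensity (isCompact_closedBall 0 R) hμ z).2

theorem log_heatConvMeas_add_smul [NeZero μ] (ht : 0 < t)
    (hμ : ∀ᵐ x ∂μ, x ∈ Metric.closedBall 0 R) (z w : 𝔼) :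
    (fun s : ℝ => log (heatConvMeas μ t (z + s • w))) = fun s =>
      -(s * inner ℝ z w + s ^ 2 * ‖w‖ ^ 2 / 2) / t
        + cgf (fun x => inner ℝ x w / t) (gaussWeighted μ t z) s := by
  funext s
  have hpos := heatConvMeas_pos ht hμ (z + s • w)
  rw [heatConvMeas_add_smul ht] at hpos ⊢
  rw [log_mul (exp_ne_zero _) (pos_of_mul_pos_right hpos (exp_pos _).le).ne', log_exp, cgf]

theorem iteratedFDeriv_two_log_heatConvMeas [NeZero μ] (ht : 0 < t)
    (hμ : ∀ᵐ x ∂μ, x ∈ Metric.closedBall 0 R) (z w : 𝔼) :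
    iteratedFDeriv ℝ 2 (fun y => log (heatConvMeas μ t y)) z ![w, w]
      = -(‖w‖ ^ 2 / t)
        + iteratedDeriv 2 (cgf (fun x => inner ℝ x w / t) (gaussWeighted μ t z)) 0 := by
  have hlog : ContDiff ℝ 2 fun y => log (heatConvMeas μ t y) :=
    (contDiff_heatConvMeas hμ).log fun y => (heatConvMeas_pos ht hμ y).ne'
  have := isFiniteMeasure_gaussWeighted (t := t) hμ z
  have hcgf : ContDiffAt ℝ 2 (cgf (fun x => inner ℝ x w / t) (gaussWeighted μ t z)) 0 := by
    refine (analyticAt_cgf ?_).contDiffAt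
    rw [integrableExpSet_eq_univ_of_mem_Icc (by fun_prop) (ae_inner_div_mem_Icc hμ ht z w)]
    simp
  have hline := iteratedDeriv_two_comp_line hlog z w 0
  rw [zero_smul, add_zero] at hline
  have hquad : (fun s : ℝ => -(s * inner ℝ z w + s ^ 2 * ‖w‖ ^ 2 / 2) / t)
      = fun s => -(inner ℝ z w / t) * s + -(‖w‖ ^ 2 / (2 * t)) * s ^ 2 := by
    funext s
    ring
  rw [← hline, log_heatConvMeas_add_smul ht hμ, iteratedDeriv_fun_add (by fun_prop) hcgf, hquad,
    iteratedDeriv_two_mul_add_mul_sq]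
  ring

theorem log_heatConvMeas_hessian_bounds [NeZero μ] (ht : 0 < t)
    (hμ : ∀ᵐ x ∂μ, x ∈ Metric.closedBall 0 R) (z w : 𝔼) :
    1 / t * (1 - R ^ 2 / t) * ‖w‖ ^ 2
        ≤ -(iteratedFDeriv ℝ 2 (fun y => log (heatConvMeas μ t y)) z ![w, w])
      ∧ -(iteratedFDeriv ℝ 2 (fun y => log (heatConvMeas μ t y)) z ![w, w])
        ≤ 1 / t * ‖w‖ ^ 2 := by
  have := isFiniteMeasure_gaussWeighted (t := t) hμ z
  obtain ⟨hvar_nonneg, hvar_le⟩ :=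
    iteratedDeriv_two_cgf_mem_Icc (by fun_prop) (ae_inner_div_mem_Icc hμ ht z w) 0
  have hsq : ((R * ‖w‖ / t - -(R * ‖w‖ / t)) / 2) ^ 2 = R ^ 2 / t * (‖w‖ ^ 2 / t) := by ring
  rw [iteratedFDeriv_two_log_heatConvMeas ht hμ z w]
  constructor
  · rw [hsq] at hvar_le
    have : 1 / t * (1 - R ^ 2 / t) * ‖w‖ ^ 2 = ‖w‖ ^ 2 / t - R ^ 2 / t * (‖w‖ ^ 2 / t) := by ring
    linarith
  · have : 1 / t * ‖w‖ ^ 2 = ‖w‖ ^ 2 / t := by ring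
    linarith

theorem convexOn_neg_log_heatConvMeas [NeZero μ] (ht : 0 < t) (hRt : R ^ 2 ≤ t)
    (hμ : ∀ᵐ x ∂μ, x ∈ Metric.closedBall 0 R) :
    ConvexOn ℝ univ fun z => -log (heatConvMeas μ t z) := by
  have hlog : ContDiff ℝ 2 fun y => log (heatConvMeas μ t y) :=
    (contDiff_heatConvMeas hμ).log fun y => (heatConvMeas_pos ht hμ y).ne'
  refine convexOn_univ_of_iteratedFDeriv_two_nonneg hlog.neg fun z w => ?_
  have hcoef : 0 ≤ 1 / t * (1 - R ^ 2 / t) * ‖w‖ ^ 2 :=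
    mul_nonneg (mul_nonneg (by positivity) (sub_nonneg.2 ((div_le_one ht).2 hRt))) (by positivity)
  rw [show (fun z => -log (heatConvMeas μ t z)) = -fun z => log (heatConvMeas μ t z) from rfl,
    iteratedFDeriv_neg_apply, neg_apply]
  exact hcoef.trans (log_heatConvMeas_hessian_bounds ht hμ z w).1

end HeatFlow

/-- **Classical log-Hessian bound for compactly supported measures (equation (2)).**
If `μ` is supported in `B(0,R)`, then for all `t > 0` and `z`,
`(1/t)(1 - R²/t) I_d ≼ -∇² log(μ*γ_t)(z) ≼ (1/t) I_d`; in particular `μ*γ_t` is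
log-concave for `t ≥ R²`. -/
theorem bounded_support_log_hessian_bounds
    (d : ℕ) (R : ℝ) (hR : 0 < R)
    (μ : Measure (EuclideanSpace ℝ (Fin d))) [IsProbabilityMeasure μ]
    (hsupp : μ (Metric.closedBall 0 R)ᶜ = 0) :
    (∀ t : ℝ, 0 < t → ∀ z w : EuclideanSpace ℝ (Fin d),
      1 / t * (1 - R ^ 2 / t) * ‖w‖ ^ 2
          ≤ -(iteratedFDeriv ℝ 2 (fun y => Real.log (heatConvMeas μ t y)) z ![w, w])
        ∧ -(iteratedFDeriv ℝ 2 (fun y => Real.log (heatConvMeas μ t y)) z ![w, w])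
          ≤ 1 / t * ‖w‖ ^ 2)
    ∧ ∀ t : ℝ, R ^ 2 ≤ t →
        ConvexOn ℝ Set.univ (fun z => -Real.log (heatConvMeas μ t z)) := by
  have hμ : ∀ᵐ x ∂μ, x ∈ Metric.closedBall 0 R := mem_ae_iff.2 hsupp
  exact ⟨fun t ht z w => log_heatConvMeas_hessian_bounds ht hμ z w, fun t hRt =>
    convexOn_neg_log_heatConvMeas ((pow_pos hR 2).trans_le hRt) hRt hμ⟩
end
end
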